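/- arXiv:1505.04348 — 12 statements merged into one kernel-verified Lean document; each statement's English description precedes it below -/
import Mathlib

section
/- Every solution of the host–parasite ecological model starting in the nonnegative quadrant is eventually bounded by the compact set [0, K₁] × [0, K₂(r₂ + e/h)/r₂]: if t ↦ (x₁(t), x₂(t)) is a solution on [0, ∞) with x₁(0) ≥ 0 and x₂(0) ≥ 0, then limsup_{t→∞} x₁(t) ≤ K₁ and limsup_{t→∞} x₂(t) ≤ K₂(r₂ + e/h)/r₂. -/
/-!
Both equations have the form `xᵢ' = xᵢ gᵢ`, so by Grönwall a zero of `xᵢ` is never left and the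
nonnegative quadrant is forward invariant. There the predation term only slows the host and the
Holling type II response `e a x₁ / (1 + h a x₁)` is below `e / h`, so each `xᵢ` is a
subsolution of a logistic equation `y' = y (c - b y)`. Such a `y` eventually enters every
sublevel set `{y ≤ c / b + ε}`, since above it `y' ≤ -b ε (c / b + ε)`, and never leaves it,
since `y'` is negative on its boundary.
-/

open Set Filter Topology

lemma eqOn_zero_of_hasDerivAt_mul {x g : ℝ → ℝ} {a b L : ℝ}
    (hx : ∀ t ∈ Icc a b, HasDerivAt x (x t * g t) t) (hg : ∀ t ∈ Icc a b, ‖g t‖ ≤ L)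
    (ha : x a = 0) : EqOn x 0 (Icc a b) := by
  intro t ht
  have hgronwall := norm_le_gronwallBound_of_norm_deriv_right_le (K := L) (ε := 0)
    (fun s hs => (hx s hs).continuousAt.continuousWithinAt)
    (fun s hs => (hx s (Ico_subset_Icc_self hs)).hasDerivWithinAt) (by simp [ha] : ‖x a‖ ≤ 0)
    (fun s hs => ?_) t ht
  · simpa [gronwallBound_ε0_δ0] using hgronwall
  · rw [norm_mul, mul_comm, add_zero]
    exact mul_le_mul_of_nonneg_right (hg s (Ico_subset_Icc_self hs)) (norm_nonneg _)

lemma eventually_eq_zero_of_hasDerivAt_mul {x g : ℝ → ℝ} {t₀ : ℝ}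
    (hx : ∀ᶠ t in 𝓝[≥] t₀, HasDerivAt x (x t * g t) t)
    (hg : ContinuousWithinAt g (Ici t₀) t₀) (h0 : x t₀ = 0) :
    ∀ᶠ t in 𝓝[≥] t₀, x t = 0 := by
  have hbound : ∀ᶠ t in 𝓝[≥] t₀, ‖g t‖ ≤ ‖g t₀‖ + 1 :=
    (hg.norm.eventually (gt_mem_nhds (lt_add_one _))).mono fun _ => le_of_lt
  obtain ⟨u, hu, hsub⟩ := mem_nhdsGE_iff_exists_Icc_subset.1 (hx.and hbound)
  filter_upwards [Icc_mem_nhdsGE hu] with t ht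
  exact eqOn_zero_of_hasDerivAt_mul (fun s hs => (hsub hs).1) (fun s hs => (hsub hs).2) h0 ht

theorem nonneg_of_hasDerivAt_mul {x g : ℝ → ℝ}
    (hx : ∀ t, 0 ≤ t → HasDerivAt x (x t * g t) t)
    (hg : ∀ t, 0 ≤ t → x t = 0 → ContinuousAt g t) (h0 : 0 ≤ x 0) {t : ℝ} (ht : 0 ≤ t) :
    0 ≤ x t := by
  have hcont : ContinuousOn x (Icc 0 t) := fun s hs => (hx s hs.1).continuousAt.continuousWithinAt
  refine IsClosed.Icc_subset_of_forall_mem_nhdsWithin (s := {s | 0 ≤ x s}) ?_ h0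
    (fun s ⟨hxs, hs⟩ => ?_) ⟨ht, le_rfl⟩
  · rw [inter_comm]
    exact hcont.preimage_isClosed_of_isClosed isClosed_Icc isClosed_Ici
  rcases (show 0 ≤ x s from hxs).lt_or_eq with hpos | hzero
  · exact mem_nhdsWithin_of_mem_nhds
      (((hx s hs.1).continuousAt.eventually (lt_mem_nhds hpos)).mono fun _ => le_of_lt)
  · have hx_ge : ∀ᶠ r in 𝓝[≥] s, HasDerivAt x (x r * g r) r :=
      eventually_nhdsWithin_of_forall fun r hr => hx r (hs.1.trans hr)
    exact nhdsWithin_mono _ Ioi_subset_Ici_self <|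
      (eventually_eq_zero_of_hasDerivAt_mul hx_ge (hg s hs.1 hzero.symm).continuousWithinAt
        hzero.symm).mono fun _ h => h.ge

lemma le_of_hasDerivAt_neg_of_eq {y y' : ℝ → ℝ} {t₀ M : ℝ}
    (hy : ∀ t, t₀ ≤ t → HasDerivAt y (y' t) t) (hy' : ∀ t, t₀ ≤ t → y t = M → y' t < 0)
    (h0 : y t₀ ≤ M) {t : ℝ} (ht : t₀ ≤ t) : y t ≤ M :=
  image_le_of_deriv_right_lt_deriv_boundary' (B := fun _ => M) (B' := 0)
    (fun s hs => (hy s hs.1).continuousAt.continuousWithinAt)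
    (fun s hs => (hy s hs.1).hasDerivWithinAt) h0 continuousOn_const
    (fun _ _ => hasDerivWithinAt_const _ _ _) (fun s hs => hy' s hs.1) ⟨ht, le_rfl⟩

lemma exists_le_of_hasDerivAt_le_neg {y y' : ℝ → ℝ} {M C : ℝ} (hC : 0 < C)
    (hy : ∀ t, 0 ≤ t → HasDerivAt y (y' t) t) (hy' : ∀ t, 0 ≤ t → M < y t → y' t ≤ -C) :
    ∃ t, 0 ≤ t ∧ y t ≤ M := by
  by_contra! hgt
  set T := (y 0 - M) / C + 1
  have hT : 0 < T := by have hy₀ := hgt 0 le_rfl; positivity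
  obtain ⟨s, hs, hslope⟩ := exists_hasDerivAt_eq_slope y y' hT
    (fun r hr => (hy r hr.1).continuousAt.continuousWithinAt) (fun r hr => hy r hr.1.le)
  have hdrop : y T - y 0 ≤ -C * T := by
    have hy's := hy' s hs.1.le (hgt s hs.1.le)
    rwa [hslope, sub_zero, div_le_iff₀ hT] at hy's
  have hCT : C * T = y 0 - M + C := by simp only [T]; field_simp
  linarith [hgt T hT.le]

theorem limsup_le_of_hasDerivAt_le_logistic {y y' : ℝ → ℝ} {b c : ℝ} (hb : 0 < b) (hc : 0 ≤ c)
    (hy : ∀ t, 0 ≤ t → HasDerivAt y (y' t) t) (hy' : ∀ t, 0 ≤ t → y' t ≤ y t * (c - b * y t))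
    (hpos : ∀ t, 0 ≤ t → 0 ≤ y t) :
    limsup y atTop ≤ c / b := by
  have hcobdd : IsCoboundedUnder (· ≤ ·) atTop y :=
    isCoboundedUnder_le_of_eventually_le atTop (eventually_atTop.2 ⟨0, hpos⟩)
  refine le_of_forall_pos_le_add fun ε hε => limsup_le_of_le hcobdd ?_
  set M := c / b + ε
  have hM : 0 < M := by positivity
  have hcM : c - b * M = -(b * ε) := by simp only [M]; field_simp; ring
  have hy'_above : ∀ t, 0 ≤ t → M ≤ y t → y' t ≤ -(b * ε * M) := fun t ht hMy => by
    nlinarith [hy' t ht, mul_le_mul_of_nonneg_left hMy hb.le]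
  obtain ⟨t₀, ht₀, hyt₀⟩ := exists_le_of_hasDerivAt_le_neg (by positivity) hy
    fun t ht h => hy'_above t ht h.le
  refine eventually_atTop.2 ⟨t₀, fun t ht => le_of_hasDerivAt_neg_of_eq
    (fun s hs => hy s (ht₀.trans hs)) (fun s hs hsM => ?_) hyt₀ ht⟩
  have hdecay := hy'_above s (ht₀.trans hs) hsM.ge
  have hrate : 0 < b * ε * M := by positivity
  linarith

lemma mul_hostRate_le {r₁ K₁ a h x₁ x₂ : ℝ} (ha : 0 ≤ a) (hh : 0 ≤ h) (hx₁ : 0 ≤ x₁)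
    (hx₂ : 0 ≤ x₂) :
    x₁ * (r₁ * (1 - x₁ / K₁) - a * x₂ / (1 + h * a * x₁)) ≤ x₁ * (r₁ - r₁ / K₁ * x₁) := by
  have hpredation : 0 ≤ a * x₂ / (1 + h * a * x₁) := by positivity
  refine mul_le_mul_of_nonneg_left ?_ hx₁
  linarith [show r₁ * (1 - x₁ / K₁) = r₁ - r₁ / K₁ * x₁ by ring]

lemma hollingTypeII_le {e a h x : ℝ} (he : 0 ≤ e) (ha : 0 ≤ a) (hh : 0 < h) (hx : 0 ≤ x) :
    e * a * x / (1 + h * a * x) ≤ e / h := by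
  rw [div_le_div_iff₀ (by positivity) hh]
  nlinarith

lemma mul_parasiteRate_le {r₂ K₂ a h e d x₁ x₂ : ℝ} (ha : 0 ≤ a) (hh : 0 < h) (he : 0 ≤ e)
    (hd : 0 ≤ d) (hx₁ : 0 ≤ x₁) (hx₂ : 0 ≤ x₂) :
    x₂ * (e * a * x₁ / (1 + h * a * x₁) - d + r₂ * (1 - x₂ / K₂)) ≤
      x₂ * (r₂ + e / h - r₂ / K₂ * x₂) := by
  refine mul_le_mul_of_nonneg_left ?_ hx₂
  linarith [hollingTypeII_le he ha hh hx₁, show r₂ * (1 - x₂ / K₂) = r₂ - r₂ / K₂ * x₂ by ring]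

/-- Eventual boundedness: every solution of the host–parasite ecological
model starting in the nonnegative quadrant satisfies
  limsup_{t→∞} x₁(t) ≤ K₁ and limsup_{t→∞} x₂(t) ≤ K₂(r₂ + e/h)/r₂. -/
theorem hostParasite_eventually_bounded
    (r₁ r₂ K₁ K₂ a h e d : ℝ)
    (hr₁ : 0 < r₁) (hr₂ : 0 < r₂) (hK₁ : 0 < K₁) (hK₂ : 0 < K₂)
    (ha : 0 < a) (hh : 0 < h) (he : 0 < e) (hd : 0 ≤ d)
    (x₁ x₂ : ℝ → ℝ)
    (hx₁ : ∀ t : ℝ, 0 ≤ t →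
      HasDerivAt x₁ (x₁ t * (r₁ * (1 - x₁ t / K₁) - a * x₂ t / (1 + h * a * x₁ t))) t)
    (hx₂ : ∀ t : ℝ, 0 ≤ t →
      HasDerivAt x₂ (x₂ t * (e * a * x₁ t / (1 + h * a * x₁ t) - d + r₂ * (1 - x₂ t / K₂))) t)
    (hx₁0 : 0 ≤ x₁ 0) (hx₂0 : 0 ≤ x₂ 0) :
    Filter.limsup x₁ Filter.atTop ≤ K₁ ∧
    Filter.limsup x₂ Filter.atTop ≤ K₂ * (r₂ + e / h) / r₂ := by
  have hx₁_nonneg : ∀ t, 0 ≤ t → 0 ≤ x₁ t := fun t ht =>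
    nonneg_of_hasDerivAt_mul hx₁ (fun s hs hzero => by
      have hc₁ := (hx₁ s hs).continuousAt
      have hc₂ := (hx₂ s hs).continuousAt
      exact (by fun_prop : ContinuousAt _ s).sub <|
        (by fun_prop : ContinuousAt _ s).div (by fun_prop) (by simp [hzero])) hx₁0 ht
  have hx₂_nonneg : ∀ t, 0 ≤ t → 0 ≤ x₂ t := fun t ht =>
    nonneg_of_hasDerivAt_mul hx₂ (fun s hs _ => by
      have hc₁ := (hx₁ s hs).continuousAt
      have hc₂ := (hx₂ s hs).continuousAt
      have hden : 0 < 1 + h * a * x₁ s := by have hx₁s := hx₁_nonneg s hs; positivity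
      exact ((((by fun_prop : ContinuousAt _ s).div (by fun_prop) hden.ne').sub
        continuousAt_const).add (by fun_prop))) hx₂0 ht
  have hlimsup₁ := limsup_le_of_hasDerivAt_le_logistic (div_pos hr₁ hK₁) hr₁.le hx₁
    (fun t ht => mul_hostRate_le ha.le hh.le (hx₁_nonneg t ht) (hx₂_nonneg t ht)) hx₁_nonneg
  have hlimsup₂ := limsup_le_of_hasDerivAt_le_logistic (div_pos hr₂ hK₂) (by positivity) hx₂
    (fun t ht => mul_parasiteRate_le ha.le hh he.le hd (hx₁_nonneg t ht) (hx₂_nonneg t ht))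
    hx₂_nonneg
  rw [div_div_cancel₀ hr₁.ne'] at hlimsup₁
  rw [div_div_eq_mul_div, mul_comm] at hlimsup₂
  exact ⟨hlimsup₁, hlimsup₂⟩
end

section
/- Assume r₂ > d. Then the point (0, K₂(1 − d/r₂)) is an equilibrium of the host–parasite ecological model, and the Jacobian matrix (the 2×2 matrix of partial derivatives of the right-hand side) at this point has eigenvalues r₁ + a·d·K₂/r₂ − a·K₂ and d − r₂. Consequently, if r₁/a < K₂(1 − d/r₂) then both eigenvalues are negative, while if r₁/a > K₂(1 − d/r₂) then the Jacobian has one positive and one negative eigenvalue (a saddle). -/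
/-!
Both components of the vector field have the form `xᵢ · (per-capita growth rate)`. On the
line `x₁ = 0` the product rule therefore makes the Jacobian lower triangular, with diagonal
entries the host rate and `x₂ ∂ₓ₂ (parasite rate) + (parasite rate)`; at the parasite-only
equilibrium the parasite rate vanishes, and the characteristic polynomial of a triangular
matrix factors over its diagonal.
-/

open Polynomial

/-- Right-hand side of the host–parasite ecological model. -/
noncomputable def ecoRHS (r₁ r₂ K₁ K₂ a h e d : ℝ) (p : ℝ × ℝ) : ℝ × ℝ :=
  (p.1 * (r₁ * (1 - p.1 / K₁) - a * p.2 / (1 + h * a * p.1)),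
   p.2 * (e * a * p.1 / (1 + h * a * p.1) - d + r₂ * (1 - p.2 / K₂)))

/-- The Jacobian matrix (matrix of partial derivatives) of a planar vector field. -/
noncomputable def ecoJac (F : ℝ × ℝ → ℝ × ℝ) (p : ℝ × ℝ) : Matrix (Fin 2) (Fin 2) ℝ :=
  !![fderiv ℝ (fun q => (F q).1) p (1, 0), fderiv ℝ (fun q => (F q).1) p (0, 1);
     fderiv ℝ (fun q => (F q).2) p (1, 0), fderiv ℝ (fun q => (F q).2) p (0, 1)]

theorem Matrix.charpoly_fin_two_of_upper_zero {R : Type*} [CommRing R] [Nontrivial R]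
    (a c b : R) : (!![a, 0; c, b]).charpoly = (X - C a) * (X - C b) := by
  rw [Matrix.charpoly_fin_two, Matrix.trace_fin_two_of, Matrix.det_fin_two_of, zero_mul,
    sub_zero, C_add, C_mul]
  ring

section PartialDerivatives

variable {𝕜 E F : Type*} [NontriviallyNormedField 𝕜] [NormedAddCommGroup E] [NormedSpace 𝕜 E]
  [NormedAddCommGroup F] [NormedSpace 𝕜 F]

theorem fderiv_apply_one_zero_of_hasDerivAt {f : 𝕜 × E → F} {x : 𝕜} {y : E} {f' : F}
    (hf : DifferentiableAt 𝕜 f (x, y)) (hx : HasDerivAt (fun t => f (t, y)) f' x) :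
    fderiv 𝕜 f (x, y) (1, 0) = f' :=
  (hf.hasFDerivAt.comp_hasDerivAt x ((hasDerivAt_id x).prodMk (hasDerivAt_const x y))).unique hx

theorem fderiv_apply_zero_one_of_hasDerivAt {f : E × 𝕜 → F} {x : E} {y : 𝕜} {f' : F}
    (hf : DifferentiableAt 𝕜 f (x, y)) (hy : HasDerivAt (fun t => f (x, t)) f' y) :
    fderiv 𝕜 f (x, y) (0, 1) = f' :=
  (hf.hasFDerivAt.comp_hasDerivAt y ((hasDerivAt_const y x).prodMk (hasDerivAt_id y))).unique hy

theorem fderiv_fst_mul_apply {g : 𝕜 × E → 𝕜} {p : 𝕜 × E} (hg : DifferentiableAt 𝕜 g p)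
    (v : 𝕜 × E) : fderiv 𝕜 (fun q => q.1 * g q) p v = p.1 * fderiv 𝕜 g p v + v.1 * g p := by
  rw [fderiv_fun_mul differentiableAt_fst hg, fderiv_fst]
  simp [mul_comm]

theorem fderiv_snd_mul_apply {g : E × 𝕜 → 𝕜} {p : E × 𝕜} (hg : DifferentiableAt 𝕜 g p)
    (v : E × 𝕜) : fderiv 𝕜 (fun q => q.2 * g q) p v = p.2 * fderiv 𝕜 g p v + v.2 * g p := by
  rw [fderiv_fun_mul differentiableAt_snd hg, fderiv_snd]
  simp [mul_comm]

end PartialDerivatives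

section HostParasite

variable (r₁ r₂ K₁ K₂ a h e d : ℝ)

noncomputable def hostGrowthRate (p : ℝ × ℝ) : ℝ :=
  r₁ * (1 - p.1 / K₁) - a * p.2 / (1 + h * a * p.1)

noncomputable def parasiteGrowthRate (p : ℝ × ℝ) : ℝ :=
  e * a * p.1 / (1 + h * a * p.1) - d + r₂ * (1 - p.2 / K₂)

theorem differentiableAt_hostGrowthRate (y : ℝ) :
    DifferentiableAt ℝ (hostGrowthRate r₁ K₁ a h) (0, y) := by
  unfold hostGrowthRate
  simp only [div_eq_mul_inv]
  fun_prop (disch := norm_num)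

theorem differentiableAt_parasiteGrowthRate (y : ℝ) :
    DifferentiableAt ℝ (parasiteGrowthRate r₂ K₂ a h e d) (0, y) := by
  unfold parasiteGrowthRate
  simp only [div_eq_mul_inv]
  fun_prop (disch := norm_num)

theorem hasDerivAt_parasiteGrowthRate_fst (y : ℝ) :
    HasDerivAt (fun t => parasiteGrowthRate r₂ K₂ a h e d (t, y)) (e * a) 0 := by
  have hden : HasDerivAt (fun t : ℝ => 1 + h * a * t) (h * a) 0 := by
    simpa using ((hasDerivAt_id (0 : ℝ)).const_mul (h * a)).const_add 1
  have hnum : HasDerivAt (fun t : ℝ => e * a * t) (e * a) 0 := by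
    simpa using (hasDerivAt_id (0 : ℝ)).const_mul (e * a)
  have := ((hnum.div hden (by norm_num)).sub_const d).add_const (r₂ * (1 - y / K₂))
  exact this.congr_deriv (by norm_num)

theorem hasDerivAt_parasiteGrowthRate_snd (y : ℝ) :
    HasDerivAt (fun t => parasiteGrowthRate r₂ K₂ a h e d (0, t)) (-(r₂ / K₂)) y := by
  have := ((((hasDerivAt_id y).div_const K₂).const_sub 1).const_mul r₂).const_add
    (e * a * 0 / (1 + h * a * 0) - d)
  exact this.congr_deriv (by simp [div_eq_mul_inv])

theorem ecoJac_zero_left (y : ℝ) :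
    ecoJac (ecoRHS r₁ r₂ K₁ K₂ a h e d) (0, y)
      = !![r₁ - a * y, 0; y * (e * a), r₂ - d - 2 * r₂ * y / K₂] := by
  have hH := differentiableAt_hostGrowthRate r₁ K₁ a h y
  have hP := differentiableAt_parasiteGrowthRate r₂ K₂ a h e d y
  have hPx := fderiv_apply_one_zero_of_hasDerivAt hP
    (hasDerivAt_parasiteGrowthRate_fst r₂ K₂ a h e d y)
  have hPy := fderiv_apply_zero_one_of_hasDerivAt hP
    (hasDerivAt_parasiteGrowthRate_snd r₂ K₂ a h e d y)
  change !![fderiv ℝ (fun q => q.1 * hostGrowthRate r₁ K₁ a h q) (0, y) (1, 0),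
      fderiv ℝ (fun q => q.1 * hostGrowthRate r₁ K₁ a h q) (0, y) (0, 1);
      fderiv ℝ (fun q => q.2 * parasiteGrowthRate r₂ K₂ a h e d q) (0, y) (1, 0),
      fderiv ℝ (fun q => q.2 * parasiteGrowthRate r₂ K₂ a h e d q) (0, y) (0, 1)] = _
  rw [fderiv_fst_mul_apply hH, fderiv_fst_mul_apply hH, fderiv_snd_mul_apply hP,
    fderiv_snd_mul_apply hP, hPx, hPy]
  norm_num [hostGrowthRate, parasiteGrowthRate]
  ring

theorem ecoRHS_parasiteOnly (hr₂ : r₂ ≠ 0) (hK₂ : K₂ ≠ 0) :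
    ecoRHS r₁ r₂ K₁ K₂ a h e d (0, K₂ * (1 - d / r₂)) = (0, 0) := by
  simp only [ecoRHS, zero_mul, Prod.mk.injEq, true_and]
  field_simp
  ring

theorem ecoJac_parasiteOnly (hr₂ : r₂ ≠ 0) (hK₂ : K₂ ≠ 0) :
    ecoJac (ecoRHS r₁ r₂ K₁ K₂ a h e d) (0, K₂ * (1 - d / r₂))
      = !![r₁ + a * d * K₂ / r₂ - a * K₂, 0; K₂ * (1 - d / r₂) * (e * a), d - r₂] := by
  have h₁₁ : r₁ - a * (K₂ * (1 - d / r₂)) = r₁ + a * d * K₂ / r₂ - a * K₂ := by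
    field_simp
    ring
  have h₂₂ : r₂ - d - 2 * r₂ * (K₂ * (1 - d / r₂)) / K₂ = d - r₂ := by
    field_simp
    ring
  rw [ecoJac_zero_left, h₁₁, h₂₂]

end HostParasite

theorem parasiteOnly_equilibrium_jacobian_general
    (r₁ r₂ K₁ K₂ a h e d : ℝ)
    (hr₂ : 0 < r₂) (hK₂ : 0 < K₂)
    (ha : 0 < a)
    (hrd : r₂ > d) :
    ecoRHS r₁ r₂ K₁ K₂ a h e d (0, K₂ * (1 - d / r₂)) = (0, 0) ∧
    (ecoJac (ecoRHS r₁ r₂ K₁ K₂ a h e d) (0, K₂ * (1 - d / r₂))).charpoly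
      = (X - C (r₁ + a * d * K₂ / r₂ - a * K₂)) * (X - C (d - r₂)) ∧
    (r₁ / a < K₂ * (1 - d / r₂) →
      (r₁ + a * d * K₂ / r₂ - a * K₂ < 0 ∧ d - r₂ < 0)) ∧
    (r₁ / a > K₂ * (1 - d / r₂) →
      (0 < r₁ + a * d * K₂ / r₂ - a * K₂ ∧ d - r₂ < 0)) := by
  have hEig : r₁ + a * d * K₂ / r₂ - a * K₂ = a * (r₁ / a - K₂ * (1 - d / r₂)) := by
    field_simp
    ring
  refine ⟨ecoRHS_parasiteOnly r₁ r₂ K₁ K₂ a h e d hr₂.ne' hK₂.ne', ?_, fun hlt => ?_, fun hgt => ?_⟩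
  · rw [ecoJac_parasiteOnly r₁ r₂ K₁ K₂ a h e d hr₂.ne' hK₂.ne',
      Matrix.charpoly_fin_two_of_upper_zero]
  · exact ⟨hEig ▸ mul_neg_of_pos_of_neg ha (sub_neg.mpr hlt), sub_neg.mpr hrd⟩
  · exact ⟨hEig ▸ mul_pos ha (sub_pos.mpr hgt), sub_neg.mpr hrd⟩

/-- when r₂ > d, the parasite-only point (0, K₂(1 − d/r₂)) is an
equilibrium, and the Jacobian there has eigenvalues r₁ + adK₂/r₂ − aK₂ and d − r₂;
sign consequences for the two stability regimes. -/
theorem parasiteOnly_equilibrium_jacobian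
    (r₁ r₂ K₁ K₂ a h e d : ℝ)
    (hr₁ : 0 < r₁) (hr₂ : 0 < r₂) (hK₁ : 0 < K₁) (hK₂ : 0 < K₂)
    (ha : 0 < a) (hh : 0 < h) (he : 0 < e) (hd : 0 ≤ d)
    (hrd : r₂ > d) :
    ecoRHS r₁ r₂ K₁ K₂ a h e d (0, K₂ * (1 - d / r₂)) = (0, 0) ∧
    (ecoJac (ecoRHS r₁ r₂ K₁ K₂ a h e d) (0, K₂ * (1 - d / r₂))).charpoly
      = (X - C (r₁ + a * d * K₂ / r₂ - a * K₂)) * (X - C (d - r₂)) ∧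
    (r₁ / a < K₂ * (1 - d / r₂) →
      (r₁ + a * d * K₂ / r₂ - a * K₂ < 0 ∧ d - r₂ < 0)) ∧
    (r₁ / a > K₂ * (1 - d / r₂) →
      (0 < r₁ + a * d * K₂ / r₂ - a * K₂ ∧ d - r₂ < 0)) :=
  parasiteOnly_equilibrium_jacobian_general r₁ r₂ K₁ K₂ a h e d hr₂ hK₂ ha hrd
end

section
/- A point (x₁*, x₂*) with x₁* > 0 and x₂* > 0 is an interior equilibrium of the host–parasite ecological model if and only if 0 < x₁* < K₁, F(x₁*) = 0, and x₂* = r₁(K₁ − x₁*)(1 + a·h·x₁*)/(a·K₁), where F is the cubic F(x) = c₃x³ + c₂x² + c₁x + c₀ with c₃ = r₁r₂(ah)², c₂ = ahr₁r₂(2 − ahK₁), c₁ = a²hK₁K₂(r₂ + e/h − d) + r₁r₂(1 − 2ahK₁), c₀ = ar₂K₁[K₂(1 − d/r₂) − r₁/a]. -/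
/-- The cubic F whose positive roots in (0, K₁) parametrize the interior equilibria
of the host–parasite ecological model. -/
noncomputable def ecoCubic (r₁ r₂ K₁ K₂ a h e d x : ℝ) : ℝ :=
  r₁ * r₂ * (a * h) ^ 2 * x ^ 3
  + a * h * r₁ * r₂ * (2 - a * h * K₁) * x ^ 2
  + (a ^ 2 * h * K₁ * K₂ * (r₂ + e / h - d) + r₁ * r₂ * (1 - 2 * a * h * K₁)) * x
  + a * r₂ * K₁ * (K₂ * (1 - d / r₂) - r₁ / a)

/-- (x₁*, x₂*) with x₁*, x₂* > 0 is an interior equilibrium iff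
0 < x₁* < K₁, F(x₁*) = 0 and x₂* = r₁(K₁ − x₁*)(1 + ahx₁*)/(aK₁). -/
theorem interior_equilibrium_characterization
    (r₁ r₂ K₁ K₂ a h e d : ℝ)
    (hr₁ : 0 < r₁) (hr₂ : 0 < r₂) (hK₁ : 0 < K₁) (hK₂ : 0 < K₂)
    (ha : 0 < a) (hh : 0 < h) (he : 0 < e) (hd : 0 ≤ d)
    (x₁ x₂ : ℝ) (hx₁ : 0 < x₁) (hx₂ : 0 < x₂) :
    (x₁ * (r₁ * (1 - x₁ / K₁) - a * x₂ / (1 + h * a * x₁)) = 0 ∧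
     x₂ * (e * a * x₁ / (1 + h * a * x₁) - d + r₂ * (1 - x₂ / K₂)) = 0)
    ↔
    (x₁ < K₁ ∧ ecoCubic r₁ r₂ K₁ K₂ a h e d x₁ = 0 ∧
     x₂ = r₁ * (K₁ - x₁) * (1 + a * h * x₁) / (a * K₁)) := by
  have hD : 0 < 1 + h * a * x₁ := by positivity
  have hDne := hD.ne'
  have hK₁ne := hK₁.ne'
  have hK₂ne := hK₂.ne'
  have hane := ha.ne'
  have hhne := hh.ne'
  have hr₂ne := hr₂.ne'
  -- key identity: if x₂ equals the formula, second bracket times positive constant is the cubic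
  have hkey : ∀ y : ℝ, y = r₁ * (K₁ - x₁) * (1 + a * h * x₁) / (a * K₁) →
      (e * a * x₁ / (1 + h * a * x₁) - d + r₂ * (1 - y / K₂)) *
        ((1 + h * a * x₁) * K₂ * a * K₁) = ecoCubic r₁ r₂ K₁ K₂ a h e d x₁ := by
    intro y hy
    subst hy
    unfold ecoCubic
    field_simp
    ring
  constructor
  · rintro ⟨h1, h2⟩
    have h1' : r₁ * (1 - x₁ / K₁) - a * x₂ / (1 + h * a * x₁) = 0 :=
      (mul_eq_zero.mp h1).resolve_left hx₁.ne'
    have h2' : e * a * x₁ / (1 + h * a * x₁) - d + r₂ * (1 - x₂ / K₂) = 0 :=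
      (mul_eq_zero.mp h2).resolve_left hx₂.ne'
    have hx2eq : x₂ = r₁ * (K₁ - x₁) * (1 + a * h * x₁) / (a * K₁) := by
      field_simp at h1' ⊢
      linarith [h1']
    have hlt : x₁ < K₁ := by
      rw [hx2eq] at hx₂
      by_contra hle
      push_neg at hle
      have h3 : r₁ * (K₁ - x₁) * (1 + a * h * x₁) ≤ 0 :=
        mul_nonpos_of_nonpos_of_nonneg
          (mul_nonpos_of_nonneg_of_nonpos hr₁.le (by linarith)) (by positivity)
      have h4 : r₁ * (K₁ - x₁) * (1 + a * h * x₁) / (a * K₁) ≤ 0 :=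
        div_nonpos_of_nonpos_of_nonneg h3 (by positivity)
      linarith
    refine ⟨hlt, ?_, hx2eq⟩
    rw [← hkey x₂ hx2eq, h2', zero_mul]
  · rintro ⟨hlt, hF, hx2eq⟩
    constructor
    · rw [hx2eq]
      field_simp
      ring
    · have := hkey x₂ hx2eq
      rw [hF] at this
      have h2' : e * a * x₁ / (1 + h * a * x₁) - d + r₂ * (1 - x₂ / K₂) = 0 := by
        have hpos : (0:ℝ) < (1 + h * a * x₁) * K₂ * a * K₁ := by positivity
        exact (mul_eq_zero.mp this).resolve_right hpos.ne'
      rw [h2', mul_zero]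
end

section
/- If d > r₂ + a·e·K₁/(a·h·K₁ + 1), then the host–parasite ecological model has no interior equilibrium, i.e. there is no point (x₁*, x₂*) with x₁* > 0 and x₂* > 0 at which both right-hand sides of the system vanish. -/
/-- if d > r₂ + aeK₁/(ahK₁ + 1), the host–parasite ecological model
has no interior equilibrium. -/
theorem no_interior_equilibrium_of_large_death_rate
    (r₁ r₂ K₁ K₂ a h e d : ℝ)
    (hr₁ : 0 < r₁) (hr₂ : 0 < r₂) (hK₁ : 0 < K₁) (hK₂ : 0 < K₂)
    (ha : 0 < a) (hh : 0 < h) (he : 0 < e) (hd : 0 ≤ d)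
    (hcond : d > r₂ + a * e * K₁ / (a * h * K₁ + 1)) :
    ¬ ∃ x₁ x₂ : ℝ, 0 < x₁ ∧ 0 < x₂ ∧
      x₁ * (r₁ * (1 - x₁ / K₁) - a * x₂ / (1 + h * a * x₁)) = 0 ∧
      x₂ * (e * a * x₁ / (1 + h * a * x₁) - d + r₂ * (1 - x₂ / K₂)) = 0 := by
  rintro ⟨x₁, x₂, hx₁, hx₂, e1, e2⟩
  have hD : (0:ℝ) < 1 + h * a * x₁ := by positivity
  have hD' : (0:ℝ) < a * h * K₁ + 1 := by positivity
  have h1 : r₁ * (1 - x₁ / K₁) - a * x₂ / (1 + h * a * x₁) = 0 := by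
    rcases mul_eq_zero.1 e1 with h' | h'
    · exact absurd h' hx₁.ne'
    · exact h'
  have h2 : e * a * x₁ / (1 + h * a * x₁) - d + r₂ * (1 - x₂ / K₂) = 0 := by
    rcases mul_eq_zero.1 e2 with h' | h'
    · exact absurd h' hx₂.ne'
    · exact h'
  have hpos : 0 < a * x₂ / (1 + h * a * x₁) := by positivity
  have hq : 0 < r₁ * (1 - x₁ / K₁) := by linarith
  have h3 : 0 < 1 - x₁ / K₁ := by nlinarith
  have hx₁K : x₁ < K₁ := by
    have := (div_lt_one hK₁).mp (by linarith)
    exact this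
  have hkey : e * a * x₁ / (1 + h * a * x₁) ≤ a * e * K₁ / (a * h * K₁ + 1) := by
    rw [div_le_div_iff₀ hD hD']
    nlinarith [mul_pos (mul_pos he ha) (sub_pos.mpr hx₁K)]
  have hr : 0 < r₂ * x₂ / K₂ := by positivity
  have hexp : r₂ * (1 - x₂ / K₂) = r₂ - r₂ * x₂ / K₂ := by ring
  linarith
end

section
/- Assume K₁ < 1/(a·h). If either (i) r₂ ≤ d < r₂ + a·e·K₁/(a·h·K₁ + 1), or (ii) d < r₂ and 0 < K₂(1 − d/r₂) < r₁/a, then the host–parasite ecological model has exactly one interior equilibrium, i.e. there is exactly one point (x₁*, x₂*) with x₁* > 0 and x₂* > 0 at which both right-hand sides of the system vanish. -/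
/-!
An interior equilibrium lies where the host nullcline `x₂ = F x₁` meets the parasite nullcline
`x₂ = G x₁`. When `a h K₁ < 1` the parabola `F` is strictly decreasing on `[0, ∞)`, while the
Holling type II response makes `G` nondecreasing there. Each of the two alternative conditions
gives `G 0 < F 0`, and both give `F K₁ = 0 < G K₁`; so the nullclines cross exactly once in
`x₁ ≥ 0`, at a point of `(0, K₁)` where `F` is positive.
-/

open Set

theorem exists_unique_eq_of_strictAntiOn_of_monotoneOn {f g : ℝ → ℝ} {a b : ℝ} (hab : a ≤ b)
    (hf : ContinuousOn f (Icc a b)) (hg : ContinuousOn g (Icc a b))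
    (hf_anti : StrictAntiOn f (Ici a)) (hg_mono : MonotoneOn g (Ici a))
    (ha : g a < f a) (hb : f b < g b) :
    ∃ x ∈ Ioo a b, f x = g x ∧ ∀ y ∈ Ici a, f y = g y → y = x := by
  have h_anti : StrictAntiOn (f - g) (Ici a) := fun x hx y hy hxy => by
    simp only [Pi.sub_apply]
    linarith [hf_anti hx hy hxy, hg_mono hx hy hxy.le]
  obtain ⟨x, hx, hx_zero⟩ : (0 : ℝ) ∈ (f - g) '' Ioo a b :=
    intermediate_value_Ioo' hab (hf.sub hg) ⟨by simpa using hb, by simpa using ha⟩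
  refine ⟨x, hx, sub_eq_zero.mp hx_zero, fun y hy hy_eq => ?_⟩
  refine h_anti.injOn hy (mem_Ici.mpr hx.1.le) ?_
  rw [hx_zero, Pi.sub_apply, hy_eq, sub_self]

theorem monotoneOn_div_one_add_mul {c : ℝ} (hc : 0 ≤ c) :
    MonotoneOn (fun x : ℝ => x / (1 + c * x)) (Ici 0) := by
  intro x (hx : 0 ≤ x) y (hy : 0 ≤ y) hxy
  rw [div_le_div_iff₀ (by positivity) (by positivity)]
  linarith

namespace HostParasite

noncomputable def hostNullcline (r₁ K₁ a h x : ℝ) : ℝ :=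
  r₁ * (1 - x / K₁) * (1 + h * a * x) / a

noncomputable def parasiteNullcline (r₂ K₂ a h e d x : ℝ) : ℝ :=
  K₂ / r₂ * (e * a * x / (1 + h * a * x) - d + r₂)

variable {r₁ r₂ K₁ K₂ a h e d x y : ℝ}

theorem host_rate_eq_zero_iff (ha : a ≠ 0) (hx : x ≠ 0) (hden : 1 + h * a * x ≠ 0) :
    x * (r₁ * (1 - x / K₁) - a * y / (1 + h * a * x)) = 0 ↔ y = hostNullcline r₁ K₁ a h x := by
  rw [mul_eq_zero, or_iff_right hx, hostNullcline, sub_eq_zero, eq_div_iff ha,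
    eq_div_iff hden]
  constructor <;> intro h_eq <;> linarith

theorem parasite_rate_eq_zero_iff (hr₂ : r₂ ≠ 0) (hK₂ : K₂ ≠ 0) (hy : y ≠ 0) :
    y * (e * a * x / (1 + h * a * x) - d + r₂ * (1 - y / K₂)) = 0 ↔
      y = parasiteNullcline r₂ K₂ a h e d x := by
  rw [mul_eq_zero, or_iff_right hy, parasiteNullcline]
  generalize e * a * x / (1 + h * a * x) = t
  field_simp
  constructor <;> intro h_eq <;> linarith

theorem interior_equilibrium_iff (ha : 0 < a) (hh : 0 ≤ h) (hr₂ : 0 < r₂) (hK₂ : 0 < K₂)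
    (hx : 0 < x) (hy : 0 < y) :
    (x * (r₁ * (1 - x / K₁) - a * y / (1 + h * a * x)) = 0 ∧
        y * (e * a * x / (1 + h * a * x) - d + r₂ * (1 - y / K₂)) = 0) ↔
      y = hostNullcline r₁ K₁ a h x ∧
        hostNullcline r₁ K₁ a h x = parasiteNullcline r₂ K₂ a h e d x := by
  have hden : 1 + h * a * x ≠ 0 := by positivity
  rw [host_rate_eq_zero_iff ha.ne' hx.ne' hden, parasite_rate_eq_zero_iff hr₂.ne' hK₂.ne' hy.ne']
  exact and_congr_right fun hy_eq => by rw [hy_eq]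

theorem continuous_hostNullcline : Continuous (hostNullcline r₁ K₁ a h) := by
  unfold hostNullcline
  fun_prop

theorem continuousOn_parasiteNullcline (ha : 0 ≤ a) (hh : 0 ≤ h) :
    ContinuousOn (parasiteNullcline r₂ K₂ a h e d) (Ici 0) := by
  unfold parasiteNullcline
  refine ContinuousOn.mul continuousOn_const (ContinuousOn.add (ContinuousOn.sub
    (ContinuousOn.div (by fun_prop) (by fun_prop) fun x hx => ?_) continuousOn_const)
    continuousOn_const)
  have : 0 ≤ h * a * x := by positivity [mem_Ici.mp hx]
  positivity

/-- `(1 - x / K₁) (1 + h a x)` is a downward parabola with vertex at `(K₁ - 1 / (h a)) / 2`,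
which is negative exactly when `h a K₁ < 1`. -/
theorem strictAntiOn_hostNullcline (hr₁ : 0 < r₁) (hK₁ : 0 < K₁) (ha : 0 < a) (hh : 0 ≤ h)
    (hahK : h * a * K₁ < 1) : StrictAntiOn (hostNullcline r₁ K₁ a h) (Ici 0) := by
  intro x (hx : 0 ≤ x) y (hy : 0 ≤ y) hxy
  have h_diff : (1 - x / K₁) * (1 + h * a * x) - (1 - y / K₁) * (1 + h * a * y) =
      (y - x) / K₁ * ((1 - h * a * K₁) + h * a * (x + y)) := by
    field_simp
    ring
  have h_pos : 0 < (y - x) / K₁ * ((1 - h * a * K₁) + h * a * (x + y)) := by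
    have : 0 ≤ h * a * (x + y) := by positivity
    have : 0 < y - x := sub_pos.mpr hxy
    have : 0 < 1 - h * a * K₁ := sub_pos.mpr hahK
    positivity
  unfold hostNullcline
  rw [div_lt_div_iff_of_pos_right ha, mul_assoc r₁, mul_assoc r₁]
  exact mul_lt_mul_of_pos_left (by linarith) hr₁

theorem monotoneOn_parasiteNullcline (hr₂ : 0 < r₂) (hK₂ : 0 < K₂) (ha : 0 < a) (hh : 0 ≤ h)
    (he : 0 ≤ e) : MonotoneOn (parasiteNullcline r₂ K₂ a h e d) (Ici 0) := by
  intro x hx y hy hxy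
  have h_resp := monotoneOn_div_one_add_mul (mul_nonneg hh ha.le) hx hy hxy
  simp only at h_resp
  unfold parasiteNullcline
  rw [mul_div_assoc, mul_div_assoc]
  gcongr

theorem hostNullcline_pos (hr₁ : 0 < r₁) (ha : 0 < a) (hh : 0 ≤ h) (hx : 0 ≤ x)
    (hxK : x < K₁) : 0 < hostNullcline r₁ K₁ a h x := by
  have : 0 < 1 - x / K₁ := by rw [sub_pos, div_lt_one (hx.trans_lt hxK)]; exact hxK
  unfold hostNullcline
  positivity

theorem hostNullcline_self (hK₁ : K₁ ≠ 0) : hostNullcline r₁ K₁ a h K₁ = 0 := by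
  simp [hostNullcline, hK₁]

theorem parasiteNullcline_zero_lt_hostNullcline_zero (hr₁ : 0 < r₁) (hr₂ : 0 < r₂)
    (hK₂ : 0 < K₂) (ha : 0 < a) (hd : r₂ ≤ d ∨ K₂ * (1 - d / r₂) < r₁ / a) :
    parasiteNullcline r₂ K₂ a h e d 0 < hostNullcline r₁ K₁ a h 0 := by
  have h_host : hostNullcline r₁ K₁ a h 0 = r₁ / a := by simp [hostNullcline]
  have h_parasite : parasiteNullcline r₂ K₂ a h e d 0 = K₂ * (1 - d / r₂) := by
    simp only [parasiteNullcline]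
    field_simp
    ring
  rw [h_host, h_parasite]
  rcases hd with hd | hd
  · have : 1 - d / r₂ ≤ 0 := by rw [sub_nonpos, one_le_div hr₂]; exact hd
    have : K₂ * (1 - d / r₂) ≤ 0 := mul_nonpos_of_nonneg_of_nonpos hK₂.le this
    have : 0 < r₁ / a := by positivity
    linarith
  · exact hd

theorem hostNullcline_self_lt_parasiteNullcline_self (hr₂ : 0 < r₂) (hK₁ : 0 < K₁)
    (hK₂ : 0 < K₂) (ha : 0 < a) (hh : 0 ≤ h) (he : 0 ≤ e)
    (hd : d < r₂ + a * e * K₁ / (a * h * K₁ + 1) ∨ d < r₂) :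
    hostNullcline r₁ K₁ a h K₁ < parasiteNullcline r₂ K₂ a h e d K₁ := by
  have h_resp : a * e * K₁ / (a * h * K₁ + 1) = e * a * K₁ / (1 + h * a * K₁) := by ring_nf
  have h_resp_nonneg : 0 ≤ e * a * K₁ / (1 + h * a * K₁) := by positivity
  rw [hostNullcline_self hK₁.ne', parasiteNullcline]
  refine mul_pos (by positivity) ?_
  rcases hd with hd | hd <;> linarith

end HostParasite

open HostParasite in
theorem unique_interior_equilibrium_general
    (r₁ r₂ K₁ K₂ a h e d : ℝ)
    (hr₁ : 0 < r₁) (hr₂ : 0 < r₂) (hK₁ : 0 < K₁) (hK₂ : 0 < K₂)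
    (ha : 0 < a) (hh : 0 < h) (he : 0 < e)
    (hK : K₁ < 1 / (a * h))
    (hcond : (r₂ ≤ d ∧ d < r₂ + a * e * K₁ / (a * h * K₁ + 1)) ∨
             (d < r₂ ∧ 0 < K₂ * (1 - d / r₂) ∧ K₂ * (1 - d / r₂) < r₁ / a)) :
    ∃! p : ℝ × ℝ, 0 < p.1 ∧ 0 < p.2 ∧
      p.1 * (r₁ * (1 - p.1 / K₁) - a * p.2 / (1 + h * a * p.1)) = 0 ∧
      p.2 * (e * a * p.1 / (1 + h * a * p.1) - d + r₂ * (1 - p.2 / K₂)) = 0 := by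
  have hahK : h * a * K₁ < 1 := by
    rw [lt_div_iff₀ (by positivity)] at hK
    linarith
  obtain ⟨x₀, ⟨hx₀, hx₀K⟩, h_cross, h_unique⟩ :=
    exists_unique_eq_of_strictAntiOn_of_monotoneOn hK₁.le continuous_hostNullcline.continuousOn
      ((continuousOn_parasiteNullcline ha.le hh.le).mono Icc_subset_Ici_self)
      (strictAntiOn_hostNullcline hr₁ hK₁ ha hh.le hahK)
      (monotoneOn_parasiteNullcline hr₂ hK₂ ha hh.le he.le)
      (parasiteNullcline_zero_lt_hostNullcline_zero hr₁ hr₂ hK₂ ha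
        (hcond.imp And.left fun h => h.2.2))
      (hostNullcline_self_lt_parasiteNullcline_self hr₂ hK₁ hK₂ ha hh.le he.le
        (hcond.imp And.right And.left))
  have hy₀ := hostNullcline_pos hr₁ ha hh.le hx₀.le hx₀K
  refine ⟨(x₀, hostNullcline r₁ K₁ a h x₀),
    ⟨hx₀, hy₀, (interior_equilibrium_iff ha hh.le hr₂ hK₂ hx₀ hy₀).2 ⟨rfl, h_cross⟩⟩, ?_⟩
  rintro ⟨x, y⟩ ⟨hx, hy, h_equil⟩
  obtain ⟨hy_eq, h_cross'⟩ := (interior_equilibrium_iff ha hh.le hr₂ hK₂ hx hy).1 h_equil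
  obtain rfl := h_unique x hx.le h_cross'
  exact Prod.ext rfl hy_eq

/-- if K₁ < 1/(ah) and either r₂ ≤ d < r₂ + aeK₁/(ahK₁ + 1),
or d < r₂ with 0 < K₂(1 − d/r₂) < r₁/a, then the host–parasite ecological model
has exactly one interior equilibrium. -/
theorem unique_interior_equilibrium
    (r₁ r₂ K₁ K₂ a h e d : ℝ)
    (hr₁ : 0 < r₁) (hr₂ : 0 < r₂) (hK₁ : 0 < K₁) (hK₂ : 0 < K₂)
    (ha : 0 < a) (hh : 0 < h) (he : 0 < e) (hd : 0 ≤ d)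
    (hK : K₁ < 1 / (a * h))
    (hcond : (r₂ ≤ d ∧ d < r₂ + a * e * K₁ / (a * h * K₁ + 1)) ∨
             (d < r₂ ∧ 0 < K₂ * (1 - d / r₂) ∧ K₂ * (1 - d / r₂) < r₁ / a)) :
    ∃! p : ℝ × ℝ, 0 < p.1 ∧ 0 < p.2 ∧
      p.1 * (r₁ * (1 - p.1 / K₁) - a * p.2 / (1 + h * a * p.1)) = 0 ∧
      p.2 * (e * a * p.1 / (1 + h * a * p.1) - d + r₂ * (1 - p.2 / K₂)) = 0 :=
  unique_interior_equilibrium_general r₁ r₂ K₁ K₂ a h e d hr₁ hr₂ hK₁ hK₂ ha hh he hK hcond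
end

section
/- If K₁ < 1/(a·h), d < r₂, and r₁/a < K₂(1 − d/r₂), then the host–parasite ecological model has no interior equilibrium, i.e. there is no point (x₁*, x₂*) with x₁* > 0 and x₂* > 0 at which both right-hand sides of the system vanish. -/
/-- if K₁ < 1/(ah), d < r₂ and r₁/a < K₂(1 − d/r₂), then the
host–parasite ecological model has no interior equilibrium. -/
theorem no_interior_equilibrium_facultative
    (r₁ r₂ K₁ K₂ a h e d : ℝ)
    (hr₁ : 0 < r₁) (hr₂ : 0 < r₂) (hK₁ : 0 < K₁) (hK₂ : 0 < K₂)
    (ha : 0 < a) (hh : 0 < h) (he : 0 < e) (hd : 0 ≤ d)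
    (hK : K₁ < 1 / (a * h)) (hdr : d < r₂)
    (hcond : r₁ / a < K₂ * (1 - d / r₂)) :
    ¬ ∃ x₁ x₂ : ℝ, 0 < x₁ ∧ 0 < x₂ ∧
      x₁ * (r₁ * (1 - x₁ / K₁) - a * x₂ / (1 + h * a * x₁)) = 0 ∧
      x₂ * (e * a * x₁ / (1 + h * a * x₁) - d + r₂ * (1 - x₂ / K₂)) = 0 := by
  rintro ⟨x₁, x₂, hx₁, hx₂, e1, e2⟩
  have hD : 0 < 1 + h * a * x₁ := by positivity
  have E1 : r₁ * (1 - x₁ / K₁) - a * x₂ / (1 + h * a * x₁) = 0 :=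
    (mul_eq_zero.mp e1).resolve_left (ne_of_gt hx₁)
  have E2 : e * a * x₁ / (1 + h * a * x₁) - d + r₂ * (1 - x₂ / K₂) = 0 :=
    (mul_eq_zero.mp e2).resolve_left (ne_of_gt hx₂)
  have E1' : r₁ * (K₁ - x₁) * (1 + h * a * x₁) = a * x₂ * K₁ := by
    field_simp at E1; linarith
  have E2' : e * a * x₁ * K₂ * r₂ + (r₂ * (K₂ - x₂) - d * K₂) * r₂ * (1 + h * a * x₁) = 0 := by
    field_simp at E2; nlinarith [E2]
  have hah : a * h * K₁ < 1 := by
    rw [lt_div_iff₀ (by positivity)] at hK; linarith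
  have hc : r₁ * r₂ < a * K₂ * (r₂ - d) := by
    rw [div_lt_iff₀ ha] at hcond
    have h2 : K₂ * (1 - d / r₂) * r₂ = K₂ * (r₂ - d) := by field_simp
    nlinarith [mul_lt_mul_of_pos_right hcond hr₂]
  -- a * x₂ < r₁  from E1'
  have k1 : a * x₂ < r₁ := by
    have p1 : 0 < r₁ * x₁ * (1 - a * h * K₁) := by
      apply mul_pos (mul_pos hr₁ hx₁); linarith
    have p2 : 0 < r₁ * x₁ * (h * a * x₁) := by positivity
    have key1 : a * x₂ * K₁ < r₁ * K₁ := by nlinarith [E1', p1, p2]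
    exact lt_of_mul_lt_mul_right (by linarith) hK₁.le
  -- r₂ x₂ > K₂ (r₂ - d)  from E2'
  have key2 : r₂ * x₂ > K₂ * (r₂ - d) := by
    by_contra hcon; push_neg at hcon
    have q1 : 0 < e * a * x₁ * K₂ * r₂ := by positivity
    have q2 : 0 ≤ (r₂ * (K₂ - x₂) - d * K₂) * (r₂ * (1 + h * a * x₁)) := by
      apply mul_nonneg (by linarith) (by positivity)
    have q3 : (r₂ * (K₂ - x₂) - d * K₂) * r₂ * (1 + h * a * x₁)
        = (r₂ * (K₂ - x₂) - d * K₂) * (r₂ * (1 + h * a * x₁)) := by ring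
    linarith [E2', q1, q2, q3]
  have f1 : a * x₂ * r₂ < r₁ * r₂ := mul_lt_mul_of_pos_right k1 hr₂
  have f2 : a * (K₂ * (r₂ - d)) < a * (r₂ * x₂) := mul_lt_mul_of_pos_left key2 ha
  have g1 : a * (K₂ * (r₂ - d)) = a * K₂ * (r₂ - d) := by ring
  have g2 : a * (r₂ * x₂) = a * x₂ * r₂ := by ring
  linarith
end

section
/- If d > r₂ + e·a·K₁/(1 + a·h·K₁), then the equilibrium (K₁, 0) of the host–parasite ecological model is globally asymptotically stable among initial conditions with positive host density: every solution t ↦ (x₁(t), x₂(t)) on [0, ∞) with x₁(0) > 0 and x₂(0) ≥ 0 satisfies x₁(t) → K₁ and x₂(t) → 0 as t → ∞. -/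
/-!
Each coordinate solves a linear equation `f' = f · g` whose coefficient is locally bounded on
the relevant side of `0`, so comparison with exponentials keeps `x₁` positive and `x₂`
nonnegative. The host then grows at most logistically and eventually stays below any `X > K₁`;
choosing `X` with `e a X / (1 + a h X) < d - r₂` makes the per-capita growth rate of the parasite
uniformly negative, so `x₂ → 0`. Once predation is negligible, the derivative of `log x₁` is
bounded below by a positive constant as long as `x₁` is below a level `c < K₁`, so `x₁ → K₁`.
-/

open Set Filter Topology Real

lemma boundary_le_of_hasDerivAt {f f' B B' : ℝ → ℝ} {s u : ℝ} (hsu : s ≤ u)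
    (hf : ∀ t ∈ Icc s u, HasDerivAt f (f' t) t) (hB : ∀ t, HasDerivAt B (B' t) t)
    (hs : B s ≤ f s) (hbound : ∀ t ∈ Ico s u, f t = B t → B' t < f' t) : B u ≤ f u := by
  have := image_le_of_deriv_right_lt_deriv_boundary (f := fun t => -f t) (f' := fun t => -f' t)
    (B := fun t => -B t) (B' := fun t => -B' t)
    (fun t ht => (hf t ht).continuousAt.neg.continuousWithinAt)
    (fun t ht => (hf t (Ico_subset_Icc_self ht)).neg.hasDerivWithinAt) (neg_le_neg hs)
    (fun t => (hB t).neg) (fun t ht heq => neg_lt_neg (hbound t ht (neg_inj.1 heq)))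
    ⟨hsu, le_rfl⟩
  exact neg_le_neg_iff.1 this

lemma pos_of_hasDerivAt_mul {f g k : ℝ → ℝ} {s : ℝ}
    (hf : ∀ t, s ≤ t → HasDerivAt f (f t * g t) t) (hk : ContinuousOn k (Ici s))
    (hgk : ∀ t, s ≤ t → 0 < f t → k t ≤ g t) (hs : 0 < f s) :
    ∀ t, s ≤ t → 0 < f t := by
  intro u hsu
  obtain ⟨M, hM⟩ := isCompact_Icc.exists_bound_of_continuousOn
    (hk.mono Icc_subset_Ici_self : ContinuousOn k (Icc s u))
  -- while `f > 0` it decays at rate at most `M`, so it stays above this faster-decaying fence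
  have hbarrier : f s * exp (-(M + 1) * (u - s)) ≤ f u := by
    refine boundary_le_of_hasDerivAt hsu (fun t ht => hf t ht.1)
      (fun t => ((((hasDerivAt_id' t).sub_const s).const_mul (-(M + 1))).exp).const_mul (f s))
      (by simp) fun t ht heq => ?_
    have hft : 0 < f t := heq ▸ by positivity
    have hkM :=
      neg_le_of_abs_le ((Real.norm_eq_abs _).symm.trans_le (hM t (Ico_subset_Icc_self ht)))
    have hgt := hgk t ht.1 hft
    rw [mul_one, ← mul_assoc, ← heq]
    nlinarith
  exact (by positivity : 0 < f s * exp (-(M + 1) * (u - s))).trans_le hbarrier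

lemma nonneg_of_hasDerivAt_mul_s11 {f g k : ℝ → ℝ} {s : ℝ}
    (hf : ∀ t, s ≤ t → HasDerivAt f (f t * g t) t) (hk : ContinuousOn k (Ici s))
    (hgk : ∀ t, s ≤ t → f t < 0 → g t ≤ k t) (hs : 0 ≤ f s) :
    ∀ t, s ≤ t → 0 ≤ f t := by
  intro u hsu
  obtain ⟨M, hM⟩ := isCompact_Icc.exists_bound_of_continuousOn
    (hk.mono Icc_subset_Ici_self : ContinuousOn k (Icc s u))
  refine le_of_forall_pos_le_add fun η hη => ?_
  -- where `f < 0` the rate `g ≤ M` keeps `f` above the negative fence `-η e^{(M+1)(t-u)}`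
  have hbarrier : -η * exp ((M + 1) * (u - u)) ≤ f u := by
    refine boundary_le_of_hasDerivAt hsu (fun t ht => hf t ht.1)
      (fun t => ((((hasDerivAt_id' t).sub_const u).const_mul (M + 1)).exp).const_mul (-η))
      ?_ fun t ht heq => ?_
    · have : 0 < η * exp ((M + 1) * (s - u)) := by positivity
      linarith
    have hft : f t < 0 := heq ▸ by
      have : 0 < η * exp ((M + 1) * (t - u)) := by positivity
      linarith
    have hkM := le_of_abs_le ((Real.norm_eq_abs _).symm.trans_le (hM t (Ico_subset_Icc_self ht)))
    have hgt := hgk t ht.1 hft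
    rw [mul_one, ← mul_assoc, ← heq]
    nlinarith
  simp only [sub_self, mul_zero, exp_zero, mul_one] at hbarrier
  linarith

lemma eventually_ge_of_hasDerivAt {f f' : ℝ → ℝ} {c δ : ℝ} (hδ : 0 < δ)
    (hf : ∀ᶠ t in atTop, HasDerivAt f (f' t) t) (hf' : ∀ᶠ t in atTop, f t ≤ c → δ ≤ f' t) :
    ∀ᶠ t in atTop, c ≤ f t := by
  obtain ⟨s, hs⟩ := eventually_atTop.1 (hf.and hf')
  have hreach : ∃ u, s ≤ u ∧ c ≤ f u := by
    by_contra! hlt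
    set u := s + 2 * (c - f s) / δ
    have hsu : s ≤ u := le_add_of_nonneg_right (by have := hlt s le_rfl; positivity)
    have hlinear : f s + δ / 2 * (u - s) ≤ f u := by
      refine boundary_le_of_hasDerivAt hsu (fun t ht => (hs t ht.1).1)
        (fun t => (((hasDerivAt_id' t).sub_const s).const_mul (δ / 2)).const_add (f s))
        (by simp) fun t ht _ => ?_
      have := (hs t ht.1).2 (hlt t ht.1).le
      linarith
    have : δ / 2 * (u - s) = c - f s := by simp only [u]; field_simp; ring
    linarith [hlt u hsu]
  obtain ⟨u, hsu, hcu⟩ := hreach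
  filter_upwards [eventually_ge_atTop u] with t hut
  refine boundary_le_of_hasDerivAt hut (fun τ hτ => (hs τ (hsu.trans hτ.1)).1)
    (fun _ => hasDerivAt_const _ c) hcu fun τ hτ heq => ?_
  exact hδ.trans_le ((hs τ (hsu.trans hτ.1)).2 heq.le)

lemma eventually_ge_of_hasDerivAt_mul {f g : ℝ → ℝ} {c δ : ℝ} (hc : 0 < c) (hδ : 0 < δ)
    (hpos : ∀ᶠ t in atTop, 0 < f t) (hf : ∀ᶠ t in atTop, HasDerivAt f (f t * g t) t)
    (hg : ∀ᶠ t in atTop, f t ≤ c → δ ≤ g t) :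
    ∀ᶠ t in atTop, c ≤ f t := by
  have hlog : ∀ᶠ t in atTop, log c ≤ log (f t) := by
    refine eventually_ge_of_hasDerivAt (f := fun t => log (f t)) (f' := g) hδ ?_ ?_
    · filter_upwards [hpos, hf] with t hft hdt
      simpa [hft.ne'] using hdt.log hft.ne'
    · filter_upwards [hpos, hg] with t hft hgt hle
      exact hgt ((log_le_log_iff hft hc).1 hle)
  filter_upwards [hpos, hlog] with t hft hle
  exact (log_le_log_iff hc hft).1 hle

lemma eventually_le_of_hasDerivAt_mul {f g : ℝ → ℝ} {c δ : ℝ} (hc : 0 < c) (hδ : 0 < δ)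
    (hf : ∀ᶠ t in atTop, HasDerivAt f (f t * g t) t)
    (hg : ∀ᶠ t in atTop, c ≤ f t → g t ≤ -δ) :
    ∀ᶠ t in atTop, f t ≤ c := by
  have := eventually_ge_of_hasDerivAt (f := fun t => -f t) (c := -c) (mul_pos hc hδ)
    (hf.mono fun t h => h.neg) (hg.mono fun t h hle => by nlinarith [h (by linarith)])
  exact this.mono fun t h => by linarith

lemma monotoneOn_mul_div_one_add_mul {p q : ℝ} (hp : 0 ≤ p) (hq : 0 ≤ q) :
    MonotoneOn (fun x => p * x / (1 + q * x)) (Ici 0) := by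
  intro x hx y hy hxy
  simp only [mem_Ici] at hx hy
  rw [div_le_div_iff₀ (by positivity) (by positivity)]
  nlinarith [mul_nonneg hp (sub_nonneg.2 hxy)]

namespace HostParasite

structure IsSolution (r₁ r₂ K₁ K₂ a h e d : ℝ) (x₁ x₂ : ℝ → ℝ) : Prop where
  hasDerivAt_fst : ∀ t : ℝ, 0 ≤ t →
    HasDerivAt x₁ (x₁ t * (r₁ * (1 - x₁ t / K₁) - a * x₂ t / (1 + h * a * x₁ t))) t
  hasDerivAt_snd : ∀ t : ℝ, 0 ≤ t →
    HasDerivAt x₂ (x₂ t * (e * a * x₁ t / (1 + h * a * x₁ t) - d + r₂ * (1 - x₂ t / K₂))) t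

variable {r₁ r₂ K₁ K₂ a h e d : ℝ} {x₁ x₂ : ℝ → ℝ}

namespace IsSolution

theorem continuousOn_fst (hs : IsSolution r₁ r₂ K₁ K₂ a h e d x₁ x₂) :
    ContinuousOn x₁ (Ici 0) :=
  fun t ht => (hs.hasDerivAt_fst t ht).continuousAt.continuousWithinAt

theorem continuousOn_snd (hs : IsSolution r₁ r₂ K₁ K₂ a h e d x₁ x₂) :
    ContinuousOn x₂ (Ici 0) :=
  fun t ht => (hs.hasDerivAt_snd t ht).continuousAt.continuousWithinAt

theorem pos_fst (hs : IsSolution r₁ r₂ K₁ K₂ a h e d x₁ x₂) (ha : 0 ≤ a) (hh : 0 ≤ h)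
    (h₀ : 0 < x₁ 0) : ∀ t, 0 ≤ t → 0 < x₁ t := by
  refine pos_of_hasDerivAt_mul hs.hasDerivAt_fst (k := fun t => r₁ * (1 - x₁ t / K₁) - a * |x₂ t|)
    (by have := hs.continuousOn_fst; have := hs.continuousOn_snd; fun_prop) (fun t _ hx => ?_) h₀
  have hD : 1 ≤ 1 + h * a * x₁ t := le_add_of_nonneg_right (by positivity)
  have : a * x₂ t / (1 + h * a * x₁ t) ≤ a * |x₂ t| :=
    calc a * x₂ t / (1 + h * a * x₁ t) ≤ a * |x₂ t| / (1 + h * a * x₁ t) := by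
          gcongr; exact le_abs_self _
      _ ≤ a * |x₂ t| := div_le_self (by positivity) hD
  linarith

theorem nonneg_snd (hs : IsSolution r₁ r₂ K₁ K₂ a h e d x₁ x₂) (ha : 0 ≤ a) (hh : 0 ≤ h)
    (hpos : ∀ t, 0 ≤ t → 0 < x₁ t) (h₀ : 0 ≤ x₂ 0) : ∀ t, 0 ≤ t → 0 ≤ x₂ t := by
  have := hs.continuousOn_fst
  have := hs.continuousOn_snd
  exact nonneg_of_hasDerivAt_mul_s11 hs.hasDerivAt_snd
    (by fun_prop (disch := intro t ht; have := hpos t ht; positivity)) (fun t _ _ => le_rfl) h₀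

theorem eventually_fst_le (hs : IsSolution r₁ r₂ K₁ K₂ a h e d x₁ x₂) (hr₁ : 0 < r₁)
    (hK₁ : 0 < K₁) (ha : 0 ≤ a) (hh : 0 ≤ h) (hpos : ∀ t, 0 ≤ t → 0 < x₁ t)
    (hnn : ∀ t, 0 ≤ t → 0 ≤ x₂ t) : ∀ X, K₁ < X → ∀ᶠ t in atTop, x₁ t ≤ X := by
  intro X hX
  have hXK := sub_pos.2 hX
  refine eventually_le_of_hasDerivAt_mul (hK₁.trans hX) (δ := r₁ * (X - K₁) / K₁) (by positivity)
    ((eventually_ge_atTop 0).mono hs.hasDerivAt_fst) ?_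
  filter_upwards [eventually_ge_atTop 0] with t ht hXt
  have hpred : 0 ≤ a * x₂ t / (1 + h * a * x₁ t) := by
    have := hpos t ht; have := hnn t ht; positivity
  have hlogistic : r₁ * (1 - x₁ t / K₁) ≤ -(r₁ * (X - K₁) / K₁) := by
    rw [show r₁ * (1 - x₁ t / K₁) = -(r₁ * (x₁ t - K₁) / K₁) by field_simp; ring, neg_le_neg_iff]
    gcongr
  linarith

theorem tendsto_snd (hs : IsSolution r₁ r₂ K₁ K₂ a h e d x₁ x₂) (hr₂ : 0 ≤ r₂) (hK₂ : 0 ≤ K₂)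
    (he : 0 ≤ e) (ha : 0 ≤ a) (hh : 0 ≤ h) (hK₁ : 0 ≤ K₁)
    (hcond : d > r₂ + e * a * K₁ / (1 + a * h * K₁)) (hpos : ∀ t, 0 ≤ t → 0 < x₁ t)
    (hnn : ∀ t, 0 ≤ t → 0 ≤ x₂ t) (hfst : ∀ X, K₁ < X → ∀ᶠ t in atTop, x₁ t ≤ X) :
    Tendsto x₂ atTop (𝓝 0) := by
  rw [mul_comm a h] at hcond
  have hF : ContinuousAt (fun x => e * a * x / (1 + h * a * x)) K₁ :=
    ContinuousAt.div (by fun_prop) (by fun_prop) (by positivity)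
  have hnear : ∀ᶠ x in 𝓝[>] K₁, e * a * x / (1 + h * a * x) < d - r₂ :=
    nhdsWithin_le_nhds (hF.eventually_lt continuousAt_const (by linarith))
  obtain ⟨X, hFX, hKX⟩ := (hnear.and self_mem_nhdsWithin).exists
  refine tendsto_order.2 ⟨fun l hl => ?_, fun u hu => ?_⟩
  · filter_upwards [eventually_ge_atTop 0] with t ht using hl.trans_le (hnn t ht)
  have hdecay : ∀ᶠ t in atTop, x₂ t ≤ u / 2 := by
    refine eventually_le_of_hasDerivAt_mul (half_pos hu) (sub_pos.2 hFX)
      ((eventually_ge_atTop 0).mono hs.hasDerivAt_snd) ?_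
    filter_upwards [eventually_ge_atTop 0, hfst X hKX] with t ht hX _
    have hF := monotoneOn_mul_div_one_add_mul (mul_nonneg he ha) (mul_nonneg hh ha)
      (hpos t ht).le (hK₁.trans hKX.le) hX
    have : 0 ≤ r₂ * (x₂ t / K₂) := by have := hnn t ht; positivity
    simp only at hF
    linarith
  filter_upwards [hdecay] with t ht using by linarith

theorem tendsto_fst (hs : IsSolution r₁ r₂ K₁ K₂ a h e d x₁ x₂) (hr₁ : 0 < r₁) (hK₁ : 0 < K₁)
    (ha : 0 ≤ a) (hh : 0 ≤ h) (hpos : ∀ t, 0 ≤ t → 0 < x₁ t) (hnn : ∀ t, 0 ≤ t → 0 ≤ x₂ t)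
    (hfst : ∀ X, K₁ < X → ∀ᶠ t in atTop, x₁ t ≤ X) (hsnd : Tendsto x₂ atTop (𝓝 0)) :
    Tendsto x₁ atTop (𝓝 K₁) := by
  refine tendsto_order.2 ⟨fun l hl => ?_, fun u hu => ?_⟩
  · obtain ⟨c, hc, hcK, hlc⟩ : ∃ c, 0 < c ∧ c < K₁ ∧ l < c :=
      ⟨(max l 0 + K₁) / 2, by positivity, by linarith [max_lt hl hK₁],
        by linarith [le_max_left l 0]⟩
    have hδ : 0 < r₁ * (1 - c / K₁) / 2 := by
      have := sub_pos.2 ((div_lt_one hK₁).2 hcK); positivity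
    have hlow : ∀ᶠ t in atTop, c ≤ x₁ t := by
      refine eventually_ge_of_hasDerivAt_mul hc hδ ((eventually_ge_atTop 0).mono hpos)
        ((eventually_ge_atTop 0).mono hs.hasDerivAt_fst) ?_
      filter_upwards [eventually_ge_atTop 0,
        (hsnd.const_mul a).eventually_lt_const (by rwa [mul_zero])] with t ht hsmall hxc
      have hD : 1 ≤ 1 + h * a * x₁ t := le_add_of_nonneg_right (by have := hpos t ht; positivity)
      have hpred : a * x₂ t / (1 + h * a * x₁ t) ≤ a * x₂ t :=
        div_le_self (by have := hnn t ht; positivity) hD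
      have hlogistic : r₁ * (x₁ t / K₁) ≤ r₁ * (c / K₁) := by gcongr
      linarith
    filter_upwards [hlow] with t ht using hlc.trans_le ht
  filter_upwards [hfst ((K₁ + u) / 2) (by linarith)] with t ht
  linarith

end IsSolution

end HostParasite

theorem hostOnly_global_stability_general
    (r₁ r₂ K₁ K₂ a h e d : ℝ)
    (hr₁ : 0 < r₁) (hr₂ : 0 < r₂) (hK₁ : 0 < K₁) (hK₂ : 0 < K₂)
    (ha : 0 < a) (hh : 0 < h) (he : 0 < e)
    (hcond : d > r₂ + e * a * K₁ / (1 + a * h * K₁))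
    (x₁ x₂ : ℝ → ℝ)
    (hx₁ : ∀ t : ℝ, 0 ≤ t →
      HasDerivAt x₁ (x₁ t * (r₁ * (1 - x₁ t / K₁) - a * x₂ t / (1 + h * a * x₁ t))) t)
    (hx₂ : ∀ t : ℝ, 0 ≤ t →
      HasDerivAt x₂ (x₂ t * (e * a * x₁ t / (1 + h * a * x₁ t) - d + r₂ * (1 - x₂ t / K₂))) t)
    (hx₁0 : 0 < x₁ 0) (hx₂0 : 0 ≤ x₂ 0) :
    Filter.Tendsto x₁ Filter.atTop (nhds K₁) ∧
    Filter.Tendsto x₂ Filter.atTop (nhds 0) := by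
  have hs : HostParasite.IsSolution r₁ r₂ K₁ K₂ a h e d x₁ x₂ := ⟨hx₁, hx₂⟩
  have hpos := hs.pos_fst ha.le hh.le hx₁0
  have hnn := hs.nonneg_snd ha.le hh.le hpos hx₂0
  have hfst := hs.eventually_fst_le hr₁ hK₁ ha.le hh.le hpos hnn
  have hsnd := hs.tendsto_snd hr₂.le hK₂.le he.le ha.le hh.le hK₁.le hcond hpos hnn hfst
  exact ⟨hs.tendsto_fst hr₁ hK₁ ha.le hh.le hpos hnn hfst hsnd, hsnd⟩

/-- if d > r₂ + eaK₁/(1 + ahK₁), then (K₁, 0) is globally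
asymptotically stable among initial conditions with positive host density:
x₁(t) → K₁ and x₂(t) → 0 as t → ∞. -/
theorem hostOnly_global_stability
    (r₁ r₂ K₁ K₂ a h e d : ℝ)
    (hr₁ : 0 < r₁) (hr₂ : 0 < r₂) (hK₁ : 0 < K₁) (hK₂ : 0 < K₂)
    (ha : 0 < a) (hh : 0 < h) (he : 0 < e) (hd : 0 ≤ d)
    (hcond : d > r₂ + e * a * K₁ / (1 + a * h * K₁))
    (x₁ x₂ : ℝ → ℝ)
    (hx₁ : ∀ t : ℝ, 0 ≤ t →
      HasDerivAt x₁ (x₁ t * (r₁ * (1 - x₁ t / K₁) - a * x₂ t / (1 + h * a * x₁ t))) t)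
    (hx₂ : ∀ t : ℝ, 0 ≤ t →
      HasDerivAt x₂ (x₂ t * (e * a * x₁ t / (1 + h * a * x₁ t) - d + r₂ * (1 - x₂ t / K₂))) t)
    (hx₁0 : 0 < x₁ 0) (hx₂0 : 0 ≤ x₂ 0) :
    Filter.Tendsto x₁ Filter.atTop (nhds K₁) ∧
    Filter.Tendsto x₂ Filter.atTop (nhds 0) :=
  hostOnly_global_stability_general r₁ r₂ K₁ K₂ a h e d hr₁ hr₂ hK₁ hK₂ ha hh he hcond x₁ x₂ hx₁ hx₂
    hx₁0 hx₂0
end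

section
/- Let F be the cubic F(x) = c₃x³ + c₂x² + c₁x + c₀ with c₃ = r₁r₂(ah)², c₂ = ahr₁r₂(2 − ahK₁), c₁ = a²hK₁K₂(r₂ + e/h − d) + r₁r₂(1 − 2ahK₁), c₀ = ar₂K₁[K₂(1 − d/r₂) − r₁/a], and set x_c² = (−c₂ + √(c₂² − 3c₁c₃))/(3c₃). Suppose d < r₂, r₁/a < K₂(1 − d/r₂), (h + d/r₂ − e/r₂) < r₁(ahK₁ + 1)²/(3a²K₁K₂), x_c² > 0, and F(x_c²) < 0. Then the host–parasite ecological model has exactly two interior equilibria, i.e. exactly two points (x₁*, x₂*) with x₁* > 0 and x₂* > 0 at which both right-hand sides vanish. -/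
lemma cubic_two_pos_roots (c3 c2 c1 c0 ρ2 ρ3 : ℝ) (hc3 : 0 < c3) (hc0 : 0 < c0)
    (h2 : 0 < ρ2) (h23 : ρ2 < ρ3)
    (e2 : c3*ρ2^3 + c2*ρ2^2 + c1*ρ2 + c0 = 0)
    (e3 : c3*ρ3^3 + c2*ρ3^2 + c1*ρ3 + c0 = 0) :
    ∀ ρ, 0 < ρ → c3*ρ^3 + c2*ρ^2 + c1*ρ + c0 = 0 → ρ = ρ2 ∨ ρ = ρ3 := by
  have hc3' : c3 ≠ 0 := ne_of_gt hc3
  set ρ1 : ℝ := -c2/c3 - ρ2 - ρ3 with hρ1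
  set A : ℝ := c1 - c3*(ρ1*ρ2 + ρ1*ρ3 + ρ2*ρ3) with hA
  set B : ℝ := c0 + c3*(ρ1*ρ2*ρ3) with hB
  have key : ∀ x : ℝ, c3*x^3 + c2*x^2 + c1*x + c0
      = c3*(x - ρ2)*(x - ρ3)*(x - ρ1) + A*x + B := by
    intro x
    rw [hA, hB, hρ1]
    field_simp
    ring
  have hA2 : A*ρ2 + B = 0 := by linear_combination e2 - key ρ2
  have hA3 : A*ρ3 + B = 0 := by linear_combination e3 - key ρ3
  have hAz : A = 0 := by
    have hz : A * (ρ2 - ρ3) = 0 := by linear_combination hA2 - hA3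
    rcases mul_eq_zero.mp hz with h' | h'
    · exact h'
    · exact absurd h' (sub_ne_zero.mpr (ne_of_lt h23))
  have hBz : B = 0 := by rw [hAz] at hA2; linarith
  have h3pos : 0 < ρ3 := lt_trans h2 h23
  have hρ1neg : ρ1 < 0 := by
    by_contra hcon
    push_neg at hcon
    have : 0 ≤ c3*(ρ1*ρ2*ρ3) := by positivity
    rw [hB] at hBz
    linarith
  intro ρ hρ hρeq
  have hfac : c3*(ρ - ρ2)*(ρ - ρ3)*(ρ - ρ1) = 0 := by
    have := key ρ
    rw [hρeq, hAz, hBz] at this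
    linarith
  rcases mul_eq_zero.mp hfac with h' | h'
  · rcases mul_eq_zero.mp h' with h'' | h''
    · rcases mul_eq_zero.mp h'' with h3 | h3
      · exact absurd h3 hc3'
      · exact Or.inl (by linarith [sub_eq_zero.mp h3])
    · exact Or.inr (by linarith [sub_eq_zero.mp h''])
  · exfalso; have := sub_eq_zero.mp h'; linarith

lemma eco_disc_aux (c3 c2 c1 c0 x : ℝ) (hc3 : 0 < c3) (hc0 : 0 < c0) (hx : 0 < x)
    (hxeq : 3*c3*x = -c2) (hcon : c2^2 - 3*c1*c3 < 0)
    (hF : c3*x^3 + c2*x^2 + c1*x + c0 < 0) : False := by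
  have hc2sq : c2^2 = 9*c3^2*x^2 := by linear_combination (c2 - 3*c3*x) * hxeq
  have h1 : 3*c3*x^2 < c1 := by nlinarith [hcon, hc2sq, mul_pos hc3 hc3, sq_nonneg x]
  have hcx : c2*x^2 = -(3*c3*x^3) := by linear_combination x^2 * hxeq
  nlinarith [hF, hcx, mul_lt_mul_of_pos_right h1 hx, hc0,
    mul_pos hc3 (pow_pos hx 3)]

/-- with c₃, c₂, c₁, c₀ the coefficients of the cubic and
x_c² = (−c₂ + √(c₂² − 3c₁c₃))/(3c₃): if d < r₂, r₁/a < K₂(1 − d/r₂),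
(h + d/r₂ − e/r₂) < r₁(ahK₁ + 1)²/(3a²K₁K₂), x_c² > 0 and F(x_c²) < 0, then the
model has exactly two interior equilibria. -/
theorem two_interior_equilibria
    (r₁ r₂ K₁ K₂ a h e d : ℝ)
    (hr₁ : 0 < r₁) (hr₂ : 0 < r₂) (hK₁ : 0 < K₁) (hK₂ : 0 < K₂)
    (ha : 0 < a) (hh : 0 < h) (he : 0 < e) (hd : 0 ≤ d)
    (hdr : d < r₂)
    (hcond : r₁ / a < K₂ * (1 - d / r₂))
    (hslope : h + d / r₂ - e / r₂ < r₁ * (a * h * K₁ + 1) ^ 2 / (3 * a ^ 2 * K₁ * K₂))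
    (xc2 : ℝ)
    (hxc2 : xc2 = (-(a * h * r₁ * r₂ * (2 - a * h * K₁))
        + Real.sqrt ((a * h * r₁ * r₂ * (2 - a * h * K₁)) ^ 2
            - 3 * (a ^ 2 * h * K₁ * K₂ * (r₂ + e / h - d)
                + r₁ * r₂ * (1 - 2 * a * h * K₁)) * (r₁ * r₂ * (a * h) ^ 2)))
        / (3 * (r₁ * r₂ * (a * h) ^ 2)))
    (hxc2pos : 0 < xc2)
    (hF : ecoCubic r₁ r₂ K₁ K₂ a h e d xc2 < 0) :
    Set.ncard {p : ℝ × ℝ | 0 < p.1 ∧ 0 < p.2 ∧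
      p.1 * (r₁ * (1 - p.1 / K₁) - a * p.2 / (1 + h * a * p.1)) = 0 ∧
      p.2 * (e * a * p.1 / (1 + h * a * p.1) - d + r₂ * (1 - p.2 / K₂)) = 0} = 2 := by
  have ha' : a ≠ 0 := ne_of_gt ha
  have hh' : h ≠ 0 := ne_of_gt hh
  have hr₂' : r₂ ≠ 0 := ne_of_gt hr₂
  have hK₁' : K₁ ≠ 0 := ne_of_gt hK₁
  have hK₂' : K₂ ≠ 0 := ne_of_gt hK₂
  simp only [ecoCubic] at hF
  obtain ⟨c3, hc3def⟩ : ∃ c3 : ℝ, c3 = r₁ * r₂ * (a * h) ^ 2 := ⟨_, rfl⟩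
  obtain ⟨c2, hc2def⟩ : ∃ c2 : ℝ, c2 = a * h * r₁ * r₂ * (2 - a * h * K₁) := ⟨_, rfl⟩
  obtain ⟨c1, hc1def⟩ : ∃ c1 : ℝ,
      c1 = a ^ 2 * h * K₁ * K₂ * (r₂ + e / h - d) + r₁ * r₂ * (1 - 2 * a * h * K₁) := ⟨_, rfl⟩
  obtain ⟨c0, hc0def⟩ : ∃ c0 : ℝ, c0 = a * r₂ * K₁ * (K₂ * (1 - d / r₂) - r₁ / a) := ⟨_, rfl⟩
  rw [← hc3def, ← hc2def, ← hc1def, ← hc0def] at hF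
  rw [← hc3def, ← hc2def, ← hc1def] at hxc2
  have hc3pos : 0 < c3 := by rw [hc3def]; positivity
  have hc0pos : 0 < c0 := by
    rw [hc0def]
    have hbr : 0 < K₂ * (1 - d / r₂) - r₁ / a := by linarith
    have := mul_pos (mul_pos (mul_pos ha hr₂) hK₁) hbr
    linarith
  have hc1' : c1 = a^2*K₁*K₂*(h*(r₂-d)+e) + r₁*r₂*(1-2*a*h*K₁) := by
    rw [hc1def]; field_simp; ring
  -- F(K₁) > 0
  have hfK₁ : c3*K₁^3 + c2*K₁^2 + c1*K₁ + c0
      = a*K₁*K₂*(e*a*K₁ + (r₂-d)*(1+h*a*K₁)) := by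
    rw [hc3def, hc2def, hc1def, hc0def]; field_simp; ring
  have hfK₁pos : 0 < c3*K₁^3 + c2*K₁^2 + c1*K₁ + c0 := by
    rw [hfK₁]
    have h1 : 0 < e*a*K₁ + (r₂-d)*(1+h*a*K₁) :=
      add_pos (mul_pos (mul_pos he ha) hK₁)
        (mul_pos (sub_pos.mpr hdr) (by positivity : (0:ℝ) < 1+h*a*K₁))
    have := mul_pos (mul_pos (mul_pos ha hK₁) hK₂) h1
    linarith
  -- the discriminant is nonnegative
  have hΔ : 0 ≤ c2 ^ 2 - 3 * c1 * c3 := by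
    by_contra hcon
    push_neg at hcon
    have hs : Real.sqrt (c2 ^ 2 - 3 * c1 * c3) = 0 :=
      Real.sqrt_eq_zero_of_nonpos (le_of_lt hcon)
    rw [hs] at hxc2
    have hxeq : 3*c3*xc2 = -c2 := by
      rw [hxc2]; field_simp; ring
    exact eco_disc_aux c3 c2 c1 c0 xc2 hc3pos hc0pos hxc2pos hxeq hcon hF
  obtain ⟨s, hsdef⟩ : ∃ s : ℝ, s = Real.sqrt (c2 ^ 2 - 3 * c1 * c3) := ⟨_, rfl⟩
  rw [← hsdef] at hxc2
  have hsq : s ^ 2 = c2 ^ 2 - 3 * c1 * c3 := by rw [hsdef]; exact Real.sq_sqrt hΔ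
  have hsnn : 0 ≤ s := hsdef ▸ Real.sqrt_nonneg _
  have hxeq : 3*c3*xc2 = -c2 + s := by
    rw [hxc2]; field_simp
  -- xc2 < K₁
  have hM : 0 < 3*c3*K₁ + c2 := by
    have hMeq : 3*c3*K₁ + c2 = 2*a*h*r₁*r₂*(a*h*K₁+1) := by rw [hc3def, hc2def]; ring
    rw [hMeq]; positivity
  have hderiv : 0 < 3*c3*K₁^2 + 2*c2*K₁ + c1 := by
    have heq : 3*c3*K₁^2 + 2*c2*K₁ + c1
        = r₁*r₂*(a*h*K₁+1)^2 + a^2*K₁*K₂*(h*(r₂-d)+e) := by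
      rw [hc3def, hc2def, hc1']; ring
    rw [heq]
    have h1 : 0 < h*(r₂-d)+e := add_pos (mul_pos hh (sub_pos.mpr hdr)) he
    positivity
  have hMsq : s^2 < (3*c3*K₁+c2)^2 := by
    rw [hsq]
    linarith [mul_pos hc3pos hderiv]
  have hsltM : s < 3*c3*K₁ + c2 := lt_of_pow_lt_pow_left₀ 2 (le_of_lt hM) hMsq
  have hxltK : xc2 < K₁ := by
    have h2 : c3*xc2 < c3*K₁ := by linarith [hxeq, hsltM]
    exact (mul_lt_mul_iff_right₀ hc3pos).mp h2
  -- the key identity linking the cubic to the second equilibrium equation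
  have hid : ∀ u : ℝ, 0 < u → c3*u^3+c2*u^2+c1*u+c0
      = a*K₁*K₂*(1+h*a*u) * (e*a*u/(1+h*a*u) - d
          + r₂*(1 - (r₁*(1-u/K₁)*(1+h*a*u)/a)/K₂)) := by
    intro u hu
    have hden : (0:ℝ) < 1+h*a*u := by linarith [mul_pos (mul_pos hh ha) hu]
    have hden' : (1+h*a*u) ≠ 0 := ne_of_gt hden
    rw [hc3def, hc2def, hc1def, hc0def]; field_simp; ring
  -- IVT: two roots
  have hcont : Continuous fun x : ℝ => c3*x^3 + c2*x^2 + c1*x + c0 := by fun_prop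
  obtain ⟨ρ2, hρ2mem, hρ2root⟩ :
      ∃ ρ ∈ Set.Ioo (0:ℝ) xc2, c3*ρ^3 + c2*ρ^2 + c1*ρ + c0 = 0 := by
    have hsub := intermediate_value_Ioo' (le_of_lt hxc2pos) hcont.continuousOn
    have h0mem : (0:ℝ) ∈ Set.Ioo ((fun x : ℝ => c3*x^3 + c2*x^2 + c1*x + c0) xc2)
        ((fun x : ℝ => c3*x^3 + c2*x^2 + c1*x + c0) 0) := by
      constructor
      · simpa using hF
      · simpa using hc0pos
    obtain ⟨ρ, hρmem, hρ⟩ := hsub h0mem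
    exact ⟨ρ, hρmem, hρ⟩
  obtain ⟨ρ3, hρ3mem, hρ3root⟩ :
      ∃ ρ ∈ Set.Ioo xc2 K₁, c3*ρ^3 + c2*ρ^2 + c1*ρ + c0 = 0 := by
    have hsub := intermediate_value_Ioo (le_of_lt hxltK) hcont.continuousOn
    have h0mem : (0:ℝ) ∈ Set.Ioo ((fun x : ℝ => c3*x^3 + c2*x^2 + c1*x + c0) xc2)
        ((fun x : ℝ => c3*x^3 + c2*x^2 + c1*x + c0) K₁) := by
      constructor
      · simpa using hF
      · simpa using hfK₁pos
    obtain ⟨ρ, hρmem, hρ⟩ := hsub h0mem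
    exact ⟨ρ, hρmem, hρ⟩
  obtain ⟨hρ2pos, hρ2lt⟩ := hρ2mem
  obtain ⟨hρ3gt, hρ3lt⟩ := hρ3mem
  have hρ23 : ρ2 < ρ3 := lt_trans hρ2lt hρ3gt
  have hρ3pos : 0 < ρ3 := lt_trans hρ2pos hρ23
  have hρ2ltK : ρ2 < K₁ := lt_trans hρ2lt hxltK
  have huniq := cubic_two_pos_roots c3 c2 c1 c0 ρ2 ρ3 hc3pos hc0pos hρ2pos hρ23 hρ2root hρ3root
  -- the second-coordinate function
  obtain ⟨g, hgdef⟩ : ∃ g : ℝ → ℝ, ∀ u, g u = r₁*(1-u/K₁)*(1+h*a*u)/a :=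
    ⟨_, fun u => rfl⟩
  have hgpos : ∀ u : ℝ, 0 < u → u < K₁ → 0 < g u := by
    intro u hu huK
    have h1 : 0 < 1 - u/K₁ := by
      rw [sub_pos, div_lt_one hK₁]; exact huK
    have h2 : (0:ℝ) < 1 + h*a*u := by linarith [mul_pos (mul_pos hh ha) hu]
    rw [hgdef]
    exact div_pos (mul_pos (mul_pos hr₁ h1) h2) ha
  -- characterization of the equilibrium set
  have mem_iff : ∀ p : ℝ × ℝ,
      (0 < p.1 ∧ 0 < p.2 ∧
        p.1 * (r₁ * (1 - p.1 / K₁) - a * p.2 / (1 + h * a * p.1)) = 0 ∧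
        p.2 * (e * a * p.1 / (1 + h * a * p.1) - d + r₂ * (1 - p.2 / K₂)) = 0)
      ↔ (0 < p.1 ∧ p.1 < K₁ ∧ c3*p.1^3 + c2*p.1^2 + c1*p.1 + c0 = 0 ∧ p.2 = g p.1) := by
    intro p
    constructor
    · rintro ⟨hp1, hp2, he1, he2⟩
      have hden : (0:ℝ) < 1 + h*a*p.1 := by linarith [mul_pos (mul_pos hh ha) hp1]
      have hden' : (1+h*a*p.1) ≠ 0 := ne_of_gt hden
      have hb1 : r₁ * (1 - p.1 / K₁) - a * p.2 / (1 + h * a * p.1) = 0 := by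
        rcases mul_eq_zero.mp he1 with h' | h'
        · exact absurd h' (ne_of_gt hp1)
        · exact h'
      have hx2 : p.2 = g p.1 := by
        rw [hgdef]
        field_simp at hb1 ⊢
        linarith
      have hpK : p.1 < K₁ := by
        have hgp : 0 < r₁*(1-p.1/K₁)*(1+h*a*p.1)/a := by
          rw [← hgdef, ← hx2]; exact hp2
        by_contra hcon
        push_neg at hcon
        have h1 : 1 - p.1/K₁ ≤ 0 := by
          rw [sub_nonpos, le_div_iff₀ hK₁]; linarith
        have h2 : r₁*(1-p.1/K₁)*(1+h*a*p.1) ≤ 0 :=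
          mul_nonpos_of_nonpos_of_nonneg
            (mul_nonpos_of_nonneg_of_nonpos (le_of_lt hr₁) h1) (le_of_lt hden)
        have := div_nonpos_of_nonpos_of_nonneg h2 (le_of_lt ha)
        linarith
      have hb2 : e * a * p.1 / (1 + h * a * p.1) - d + r₂ * (1 - p.2 / K₂) = 0 := by
        rcases mul_eq_zero.mp he2 with h' | h'
        · exact absurd h' (ne_of_gt hp2)
        · exact h'
      refine ⟨hp1, hpK, ?_, hx2⟩
      have hk := hid p.1 hp1
      rw [← hgdef, ← hx2] at hk
      rw [hk, hb2, mul_zero]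
    · rintro ⟨hp1, hpK, hroot, hx2⟩
      have hden : (0:ℝ) < 1 + h*a*p.1 := by linarith [mul_pos (mul_pos hh ha) hp1]
      have hden' : (1+h*a*p.1) ≠ 0 := ne_of_gt hden
      have hp2 : 0 < p.2 := hx2 ▸ hgpos p.1 hp1 hpK
      refine ⟨hp1, hp2, ?_, ?_⟩
      · have hb1 : r₁ * (1 - p.1 / K₁) - a * p.2 / (1 + h * a * p.1) = 0 := by
          rw [hx2, hgdef]
          field_simp
          ring
        rw [hb1, mul_zero]
      · have hb2 : e * a * p.1 / (1 + h * a * p.1) - d + r₂ * (1 - p.2 / K₂) = 0 := by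
          have hkey := hid p.1 hp1
          rw [← hgdef, ← hx2, hroot] at hkey
          have hnz : a*K₁*K₂*(1+h*a*p.1) ≠ 0 :=
            ne_of_gt (mul_pos (mul_pos (mul_pos ha hK₁) hK₂) hden)
          exact (mul_eq_zero.mp hkey.symm).resolve_left hnz
        rw [hb2, mul_zero]
  -- the set equals the pair
  have hset : {p : ℝ × ℝ | 0 < p.1 ∧ 0 < p.2 ∧
      p.1 * (r₁ * (1 - p.1 / K₁) - a * p.2 / (1 + h * a * p.1)) = 0 ∧
      p.2 * (e * a * p.1 / (1 + h * a * p.1) - d + r₂ * (1 - p.2 / K₂)) = 0}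
      = {((ρ2, g ρ2) : ℝ × ℝ), (ρ3, g ρ3)} := by
    ext p
    simp only [Set.mem_setOf_eq, Set.mem_insert_iff, Set.mem_singleton_iff]
    rw [mem_iff p]
    constructor
    · rintro ⟨hp1, hpK, hroot, hx2⟩
      rcases huniq p.1 hp1 hroot with h' | h'
      · left; rw [Prod.ext_iff]; exact ⟨h', by rw [hx2, h']⟩
      · right; rw [Prod.ext_iff]; exact ⟨h', by rw [hx2, h']⟩
    · rintro (h' | h') <;> rw [h'] <;>
        [exact ⟨hρ2pos, hρ2ltK, hρ2root, rfl⟩; exact ⟨hρ3pos, hρ3lt, hρ3root, rfl⟩]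
  rw [hset]
  exact Set.ncard_pair (by
    intro hcon
    rw [Prod.ext_iff] at hcon
    exact absurd hcon.1 (ne_of_lt hρ23))
end

section
/- Let F be the cubic F(x) = c₃x³ + c₂x² + c₁x + c₀ with c₃ = r₁r₂(ah)², c₂ = ahr₁r₂(2 − ahK₁), c₁ = a²hK₁K₂(r₂ + e/h − d) + r₁r₂(1 − 2ahK₁), c₀ = ar₂K₁[K₂(1 − d/r₂) − r₁/a], and set x_c¹ = (−c₂ − √(c₂² − 3c₁c₃))/(3c₃) and x_c² = (−c₂ + √(c₂² − 3c₁c₃))/(3c₃). Suppose r₁/a > K₂(1 − d/r₂), (h + d/r₂ − e/r₂) < r₁(ahK₁ + 1)²/(3a²K₁K₂), x_c¹ > 0, F(x_c¹) > 0, and F(x_c²) < 0. Then the host–parasite ecological model has exactly three interior equilibria, i.e. exactly three points (x₁*, x₂*) with x₁* > 0 and x₂* > 0 at which both right-hand sides vanish. -/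
set_option maxHeartbeats 1000000


/-- with c₃, c₂, c₁, c₀ the coefficients of the cubic,
x_c¹ = (−c₂ − √(c₂² − 3c₁c₃))/(3c₃) and x_c² = (−c₂ + √(c₂² − 3c₁c₃))/(3c₃):
if r₁/a > K₂(1 − d/r₂), (h + d/r₂ − e/r₂) < r₁(ahK₁ + 1)²/(3a²K₁K₂), x_c¹ > 0,
F(x_c¹) > 0 and F(x_c²) < 0, then the model has exactly three interior equilibria. -/
theorem three_interior_equilibria
    (r₁ r₂ K₁ K₂ a h e d : ℝ)
    (hr₁ : 0 < r₁) (hr₂ : 0 < r₂) (hK₁ : 0 < K₁) (hK₂ : 0 < K₂)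
    (ha : 0 < a) (hh : 0 < h) (he : 0 < e) (hd : 0 ≤ d)
    (hcond : r₁ / a > K₂ * (1 - d / r₂))
    (hslope : h + d / r₂ - e / r₂ < r₁ * (a * h * K₁ + 1) ^ 2 / (3 * a ^ 2 * K₁ * K₂))
    (xc1 xc2 : ℝ)
    (hxc1 : xc1 = (-(a * h * r₁ * r₂ * (2 - a * h * K₁))
        - Real.sqrt ((a * h * r₁ * r₂ * (2 - a * h * K₁)) ^ 2
            - 3 * (a ^ 2 * h * K₁ * K₂ * (r₂ + e / h - d)
                + r₁ * r₂ * (1 - 2 * a * h * K₁)) * (r₁ * r₂ * (a * h) ^ 2)))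
        / (3 * (r₁ * r₂ * (a * h) ^ 2)))
    (hxc2 : xc2 = (-(a * h * r₁ * r₂ * (2 - a * h * K₁))
        + Real.sqrt ((a * h * r₁ * r₂ * (2 - a * h * K₁)) ^ 2
            - 3 * (a ^ 2 * h * K₁ * K₂ * (r₂ + e / h - d)
                + r₁ * r₂ * (1 - 2 * a * h * K₁)) * (r₁ * r₂ * (a * h) ^ 2)))
        / (3 * (r₁ * r₂ * (a * h) ^ 2)))
    (hxc1pos : 0 < xc1)
    (hF1 : 0 < ecoCubic r₁ r₂ K₁ K₂ a h e d xc1)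
    (hF2 : ecoCubic r₁ r₂ K₁ K₂ a h e d xc2 < 0) :
    Set.ncard {p : ℝ × ℝ | 0 < p.1 ∧ 0 < p.2 ∧
      p.1 * (r₁ * (1 - p.1 / K₁) - a * p.2 / (1 + h * a * p.1)) = 0 ∧
      p.2 * (e * a * p.1 / (1 + h * a * p.1) - d + r₂ * (1 - p.2 / K₂)) = 0} = 3 := by
  set c₃ := r₁ * r₂ * (a * h) ^ 2 with hc3def
  set c₂ := a * h * r₁ * r₂ * (2 - a * h * K₁) with hc2def
  set c₁ := a ^ 2 * h * K₁ * K₂ * (r₂ + e / h - d) + r₁ * r₂ * (1 - 2 * a * h * K₁) with hc1def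
  set c₀ := a * r₂ * K₁ * (K₂ * (1 - d / r₂) - r₁ / a) with hc0def
  set D := c₂ ^ 2 - 3 * c₁ * c₃ with hDdef
  set s := Real.sqrt D with hsdef
  set F : ℝ → ℝ := fun x => c₃ * x ^ 3 + c₂ * x ^ 2 + c₁ * x + c₀ with hFdef
  have hFe : ∀ x, ecoCubic r₁ r₂ K₁ K₂ a h e d x = F x := fun x => rfl
  rw [hFe] at hF1 hF2
  have hc3 : 0 < c₃ := by positivity
  have h3c3 : (0:ℝ) < 3 * c₃ := by positivity
  have hne : xc1 ≠ xc2 := by intro hq; rw [hq] at hF1; linarith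
  have hsne : s ≠ 0 := by
    intro hq
    apply hne; rw [hxc1, hxc2, hq]; ring
  have hspos : 0 < s := lt_of_le_of_ne (Real.sqrt_nonneg D) (Ne.symm hsne)
  have hDpos : 0 < D := Real.sqrt_pos.mp hspos
  have hs2 : s ^ 2 = D := Real.sq_sqrt hDpos.le
  have hlt : xc1 < xc2 := by
    rw [hxc1, hxc2]
    rw [div_lt_div_iff₀ h3c3 h3c3]
    exact mul_lt_mul_of_pos_right (by linarith) h3c3
  -- sum and product of critical points
  have hsum : 3 * c₃ * (xc1 + xc2) = -2 * c₂ := by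
    rw [hxc1, hxc2]; field_simp; ring
  have hprod : 3 * c₃ * (xc1 * xc2) = c₁ := by
    rw [hxc1, hxc2]
    have h9 : (3 * c₃) * ((-c₂ - s) / (3 * c₃) * ((-c₂ + s) / (3 * c₃)))
        = (c₂ ^ 2 - s ^ 2) / (3 * c₃) := by field_simp; ring
    rw [h9, hs2, hDdef]
    field_simp; ring
  -- derivative of F
  have hder : ∀ x : ℝ, HasDerivAt F (3 * c₃ * (x - xc1) * (x - xc2)) x := by
    intro x
    have p3 : HasDerivAt (fun x : ℝ => c₃ * x ^ 3) (c₃ * (3 * x ^ 2)) x := by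
      simpa using (hasDerivAt_pow 3 x).const_mul c₃
    have p2 : HasDerivAt (fun x : ℝ => c₂ * x ^ 2) (c₂ * (2 * x)) x := by
      simpa using (hasDerivAt_pow 2 x).const_mul c₂
    have p1 : HasDerivAt (fun x : ℝ => c₁ * x) c₁ x := by
      simpa using (hasDerivAt_id x).const_mul c₁
    have h1 : HasDerivAt F (c₃ * (3 * x ^ 2) + c₂ * (2 * x) + c₁) x :=
      ((p3.add p2).add p1).add_const c₀
    convert h1 using 1
    have e1 : 3 * c₃ * (x - xc1) * (x - xc2)
        = 3 * c₃ * x ^ 2 - (3 * c₃ * (xc1 + xc2)) * x + 3 * c₃ * (xc1 * xc2) := by ring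
    rw [e1, hsum, hprod]; ring
  have hcont : Continuous F := by
    rw [hFdef]; fun_prop
  -- monotonicity pieces
  have hmono1 : StrictMonoOn F (Set.Iic xc1) := by
    apply strictMonoOn_of_deriv_pos (convex_Iic xc1) (hcont.continuousOn)
    intro x hx
    rw [interior_Iic, Set.mem_Iio] at hx
    rw [(hder x).deriv]
    have h1 : x - xc1 < 0 := sub_neg.mpr hx
    have h2 : x - xc2 < 0 := by linarith [hx.trans hlt]
    calc (0:ℝ) < 3 * c₃ * ((x - xc1) * (x - xc2)) :=
          mul_pos h3c3 (mul_pos_of_neg_of_neg h1 h2)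
      _ = 3 * c₃ * (x - xc1) * (x - xc2) := by ring
  have hanti : StrictAntiOn F (Set.Icc xc1 xc2) := by
    apply strictAntiOn_of_deriv_neg (convex_Icc xc1 xc2) (hcont.continuousOn)
    intro x hx
    rw [interior_Icc] at hx
    rw [(hder x).deriv]
    have h1 : 0 < x - xc1 := by linarith [hx.1]
    have h2 : x - xc2 < 0 := by linarith [hx.2]
    calc 3 * c₃ * (x - xc1) * (x - xc2) = 3 * c₃ * (x - xc1) * (x - xc2) := rfl
      _ < 0 := mul_neg_of_pos_of_neg (mul_pos h3c3 h1) h2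
  have hmono2 : StrictMonoOn F (Set.Ici xc2) := by
    apply strictMonoOn_of_deriv_pos (convex_Ici xc2) (hcont.continuousOn)
    intro x hx
    rw [interior_Ici, Set.mem_Ioi] at hx
    rw [(hder x).deriv]
    have h1 : 0 < x - xc2 := by linarith
    have h2 : 0 < x - xc1 := by linarith [hlt.trans hx]
    exact mul_pos (mul_pos h3c3 h2) h1
  -- F 0 < 0
  have hF0 : F 0 < 0 := by
    have h1 : K₂ * (1 - d / r₂) - r₁ / a < 0 := by linarith
    have h2 : F 0 = c₀ := by simp [hFdef]
    rw [h2, hc0def]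
    exact mul_neg_of_pos_of_neg (by positivity) h1
  -- three roots by IVT
  obtain ⟨ρ₁, hρ₁mem, hρ₁⟩ : ∃ x ∈ Set.Ioo (0:ℝ) xc1, F x = 0 := by
    have h0 : (0:ℝ) ∈ Set.Ioo (F 0) (F xc1) := ⟨hF0, hF1⟩
    have := intermediate_value_Ioo hxc1pos.le hcont.continuousOn h0
    obtain ⟨x, hx, hfx⟩ := this
    exact ⟨x, hx, hfx⟩
  obtain ⟨ρ₂, hρ₂mem, hρ₂⟩ : ∃ x ∈ Set.Ioo xc1 xc2, F x = 0 := by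
    have h0 : (0:ℝ) ∈ Set.Ioo (F xc2) (F xc1) := ⟨hF2, hF1⟩
    have := intermediate_value_Ioo' hlt.le hcont.continuousOn h0
    obtain ⟨x, hx, hfx⟩ := this
    exact ⟨x, hx, hfx⟩
  -- a large point where F is positive
  obtain ⟨M, hMgt, hFM⟩ : ∃ M, xc2 < M ∧ 0 < F M := by
    set T := |c₂| + |c₁| + |c₀| with hTdef
    have hT0 : 0 ≤ T := by positivity
    refine ⟨max (xc2 + 1) (T / c₃ + 1), lt_of_lt_of_le (by linarith) (le_max_left _ _), ?_⟩
    set M := max (xc2 + 1) (T / c₃ + 1) with hM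
    have hM1 : T / c₃ + 1 ≤ M := le_max_right _ _
    have hM2 : 1 ≤ M := by
      have : 0 ≤ T / c₃ := by positivity
      linarith
    have hMc : T < c₃ * M := by
      have h1 : T / c₃ < M := by linarith
      calc T = c₃ * (T / c₃) := by field_simp
        _ < c₃ * M := by exact mul_lt_mul_of_pos_left h1 hc3
    have hb2 : -|c₂| ≤ c₂ := neg_abs_le c₂
    have hb1 : -|c₁| ≤ c₁ := neg_abs_le c₁
    have hb0 : -|c₀| ≤ c₀ := neg_abs_le c₀
    have hMM : M ≤ M ^ 2 := by nlinarith
    have hMsq1 : 1 ≤ M ^ 2 := by nlinarith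
    have i1 : -|c₂| * M ^ 2 ≤ c₂ * M ^ 2 := mul_le_mul_of_nonneg_right hb2 (sq_nonneg M)
    have i2 : -|c₁| * M ^ 2 ≤ c₁ * M := by
      have a1 : -|c₁| * M ≤ c₁ * M := mul_le_mul_of_nonneg_right hb1 (by linarith)
      have a2 : -|c₁| * M ^ 2 ≤ -|c₁| * M :=
        mul_le_mul_of_nonpos_left hMM (neg_nonpos.mpr (abs_nonneg c₁))
      linarith
    have i3 : -|c₀| * M ^ 2 ≤ c₀ := by
      have a2 : -|c₀| * M ^ 2 ≤ -|c₀| * 1 :=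
        mul_le_mul_of_nonpos_left hMsq1 (neg_nonpos.mpr (abs_nonneg c₀))
      linarith
    have key : M ^ 2 * (c₃ * M - T) ≤ F M := by
      have hexp : M ^ 2 * (c₃ * M - T)
          = c₃ * M ^ 3 + (-|c₂| * M ^ 2) + (-|c₁| * M ^ 2) + (-|c₀| * M ^ 2) := by
        rw [hTdef]; ring
      have hFM' : F M = c₃ * M ^ 3 + c₂ * M ^ 2 + c₁ * M + c₀ := rfl
      rw [hexp, hFM']
      linarith
    have : 0 < M ^ 2 * (c₃ * M - T) := by
      apply mul_pos (by positivity) (by linarith)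
    linarith
  obtain ⟨ρ₃, hρ₃mem, hρ₃⟩ : ∃ x ∈ Set.Ioo xc2 M, F x = 0 := by
    have h0 : (0:ℝ) ∈ Set.Ioo (F xc2) (F M) := ⟨hF2, hFM⟩
    have := intermediate_value_Ioo hMgt.le hcont.continuousOn h0
    obtain ⟨x, hx, hfx⟩ := this
    exact ⟨x, hx, hfx⟩
  have hρ₁pos : 0 < ρ₁ := hρ₁mem.1
  have h12 : ρ₁ < ρ₂ := hρ₁mem.2.trans hρ₂mem.1
  have h23 : ρ₂ < ρ₃ := hρ₂mem.2.trans hρ₃mem.1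
  have hρ₂pos : 0 < ρ₂ := hρ₁pos.trans h12
  have hρ₃pos : 0 < ρ₃ := hρ₂pos.trans h23
  -- every root is one of ρ₁, ρ₂, ρ₃
  have hroots : ∀ x : ℝ, F x = 0 → x = ρ₁ ∨ x = ρ₂ ∨ x = ρ₃ := by
    intro x hx
    rcases le_or_gt x xc1 with h1 | h1
    · left
      exact hmono1.injOn h1 (le_of_lt hρ₁mem.2) (hx.trans hρ₁.symm)
    rcases le_or_gt x xc2 with h2 | h2
    · right; left
      exact hanti.injOn ⟨h1.le, h2⟩ ⟨hρ₂mem.1.le, hρ₂mem.2.le⟩ (hx.trans hρ₂.symm)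
    · right; right
      exact hmono2.injOn h2.le hρ₃mem.1.le (hx.trans hρ₃.symm)
  -- Vieta: sum of the roots
  have e1 : c₃ * ρ₁ ^ 3 + c₂ * ρ₁ ^ 2 + c₁ * ρ₁ + c₀ = 0 := hρ₁
  have e2 : c₃ * ρ₂ ^ 3 + c₂ * ρ₂ ^ 2 + c₁ * ρ₂ + c₀ = 0 := hρ₂
  have e3 : c₃ * ρ₃ ^ 3 + c₂ * ρ₃ ^ 2 + c₁ * ρ₃ + c₀ = 0 := hρ₃
  set A := c₂ + c₃ * (ρ₁ + ρ₂ + ρ₃) with hAdef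
  set B := c₁ - c₃ * (ρ₁ * ρ₂ + ρ₁ * ρ₃ + ρ₂ * ρ₃) with hBdef
  set C := c₀ + c₃ * (ρ₁ * ρ₂ * ρ₃) with hCdef
  have q1 : A * ρ₁ ^ 2 + B * ρ₁ + C = 0 := by rw [hAdef, hBdef, hCdef]; linear_combination e1
  have q2 : A * ρ₂ ^ 2 + B * ρ₂ + C = 0 := by rw [hAdef, hBdef, hCdef]; linear_combination e2
  have q3 : A * ρ₃ ^ 2 + B * ρ₃ + C = 0 := by rw [hAdef, hBdef, hCdef]; linear_combination e3
  have s12 : A * (ρ₁ + ρ₂) + B = 0 := by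
    have hz : (ρ₁ - ρ₂) * (A * (ρ₁ + ρ₂) + B) = 0 := by linear_combination q1 - q2
    rcases mul_eq_zero.mp hz with hz | hz
    · exact absurd hz (sub_ne_zero.mpr h12.ne)
    · exact hz
  have s23 : A * (ρ₂ + ρ₃) + B = 0 := by
    have hz : (ρ₂ - ρ₃) * (A * (ρ₂ + ρ₃) + B) = 0 := by linear_combination q2 - q3
    rcases mul_eq_zero.mp hz with hz | hz
    · exact absurd hz (sub_ne_zero.mpr h23.ne)
    · exact hz
  have hA0 : A = 0 := by
    have hz : A * (ρ₁ - ρ₃) = 0 := by linear_combination s12 - s23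
    rcases mul_eq_zero.mp hz with hz | hz
    · exact hz
    · exact absurd hz (sub_ne_zero.mpr (h12.trans h23).ne)
  have hsum3 : c₃ * (ρ₁ + ρ₂ + ρ₃) = -c₂ := by
    have := hA0; rw [hAdef] at this; linarith
  -- all roots below K₁
  have hρ₃K : ρ₃ < K₁ := by
    have h1 : -c₂ < c₃ * K₁ := by
      have hpos : 0 < a * h * r₁ * r₂ := by positivity
      have : r₁ * r₂ * (a * h) ^ 2 * K₁ - (-(a * h * r₁ * r₂ * (2 - a * h * K₁)))
          = 2 * (a * h * r₁ * r₂) := by ring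
      rw [hc2def, hc3def]
      linarith [this]
    have hdist : c₃ * (ρ₁ + ρ₂ + ρ₃) = c₃ * ρ₁ + c₃ * ρ₂ + c₃ * ρ₃ := by ring
    have h2 : c₃ * ρ₃ < c₃ * K₁ := by
      linarith [mul_pos hc3 hρ₁pos, mul_pos hc3 hρ₂pos]
    exact lt_of_mul_lt_mul_left h2 hc3.le
  have hρ₁K : ρ₁ < K₁ := by linarith
  have hρ₂K : ρ₂ < K₁ := by linarith
  -- the parasite nullcline
  set g : ℝ → ℝ := fun x => r₁ * (1 - x / K₁) * (1 + h * a * x) / a with hgdef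
  have hgpos : ∀ x : ℝ, 0 < x → x < K₁ → 0 < g x := by
    intro x hx hxK
    rw [hgdef]
    have h1 : 0 < 1 - x / K₁ := by
      rw [sub_pos, div_lt_one hK₁]; exact hxK
    have h2 : 0 < 1 + h * a * x := by positivity
    positivity
  have hdenne : ∀ x : ℝ, 0 < x → (1 + h * a * x) ≠ 0 := by
    intro x hx; positivity
  -- key identity: F x = a*K₁*K₂*(1+h*a*x) * (second equation with x₂ = g x)
  have hkey : ∀ x : ℝ, 0 < x →
      a * K₁ * K₂ * (1 + h * a * x)
        * (e * a * x / (1 + h * a * x) - d + r₂ * (1 - g x / K₂)) = F x := by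
    intro x hx
    have hden : (1 + h * a * x) ≠ 0 := hdenne x hx
    simp only [hgdef, hFdef, hc3def, hc2def, hc1def, hc0def]
    field_simp
    ring
  -- the first equation holds on the nullcline
  have hkey1 : ∀ x : ℝ, 0 < x →
      r₁ * (1 - x / K₁) - a * g x / (1 + h * a * x) = 0 := by
    intro x hx
    have hden : (1 + h * a * x) ≠ 0 := hdenne x hx
    simp only [hgdef]
    field_simp
    ring
  -- characterize the equilibrium set
  set E := {p : ℝ × ℝ | 0 < p.1 ∧ 0 < p.2 ∧
      p.1 * (r₁ * (1 - p.1 / K₁) - a * p.2 / (1 + h * a * p.1)) = 0 ∧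
      p.2 * (e * a * p.1 / (1 + h * a * p.1) - d + r₂ * (1 - p.2 / K₂)) = 0} with hEdef
  have hEin : ∀ ρ : ℝ, 0 < ρ → ρ < K₁ → F ρ = 0 → (ρ, g ρ) ∈ E := by
    intro ρ hρ hρK hFρ
    refine ⟨hρ, hgpos ρ hρ hρK, ?_, ?_⟩
    · simp only
      rw [hkey1 ρ hρ, mul_zero]
    · simp only
      have h1 := hkey ρ hρ
      rw [hFρ] at h1
      have h2 : a * K₁ * K₂ * (1 + h * a * ρ) ≠ 0 := by positivity
      have h3 : e * a * ρ / (1 + h * a * ρ) - d + r₂ * (1 - g ρ / K₂) = 0 :=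
        (mul_eq_zero.mp h1).resolve_left h2
      rw [h3, mul_zero]
  have hEsub : E ⊆ {(ρ₁, g ρ₁), (ρ₂, g ρ₂), (ρ₃, g ρ₃)} := by
    rintro ⟨x, y⟩ ⟨hx, hy, he1, he2⟩
    simp only at hx hy he1 he2
    have hden : (1 + h * a * x) ≠ 0 := hdenne x hx
    have hf1 : r₁ * (1 - x / K₁) - a * y / (1 + h * a * x) = 0 :=
      (mul_eq_zero.mp he1).resolve_left hx.ne'
    have hyg : y = g x := by
      rw [hgdef]
      field_simp at hf1 ⊢
      linarith
    have hf2 : e * a * x / (1 + h * a * x) - d + r₂ * (1 - y / K₂) = 0 :=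
      (mul_eq_zero.mp he2).resolve_left hy.ne'
    have hFx : F x = 0 := by
      rw [← hkey x hx, ← hyg, hf2, mul_zero]
    simp only [Set.mem_insert_iff, Set.mem_singleton_iff]
    rcases hroots x hFx with h | h | h <;>
      [left; (right; left); (right; right)] <;>
      · subst h; rw [hyg]
  have hEeq : E = {(ρ₁, g ρ₁), (ρ₂, g ρ₂), (ρ₃, g ρ₃)} := by
    apply le_antisymm hEsub
    rintro p (hp | hp | hp) <;> rw [hp] <;>
      [exact hEin ρ₁ hρ₁pos hρ₁K hρ₁; exact hEin ρ₂ hρ₂pos hρ₂K hρ₂;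
       exact hEin ρ₃ hρ₃pos hρ₃K hρ₃]
  rw [hEeq]
  apply Set.ncard_eq_three.mpr
  refine ⟨_, _, _, ?_, ?_, ?_, rfl⟩
  · intro hq; exact h12.ne (congrArg Prod.fst hq)
  · intro hq; exact (h12.trans h23).ne (congrArg Prod.fst hq)
  · intro hq; exact h23.ne (congrArg Prod.fst hq)
end

section
/- The ESS maximum principle holds at the host-only state (K₀₁, 0) with trait values (0, 0): (i) for every v₁ ∈ ℝ, the host fitness G₁(v₁) = r₁(1 − K₀₁/K₁(v₁)) satisfies G₁(v₁) ≤ 0, with equality if and only if v₁ = 0; and (ii) if r₂ + e·a₀·K₀₁/(1 + a₀·h·K₀₁) < d, then for every v₂ ∈ ℝ the parasite fitness G₂(v₂) = e·a(0, v₂)·K₀₁/(1 + h·a(0, v₂)·K₀₁) − d + r₂ satisfies G₂(v₂) ≤ e·a₀·K₀₁/(1 + h·a₀·K₀₁) − d + r₂ < 0, with equality in the first inequality if and only if v₂ = 0. -/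
lemma holling_mono {e h K a b : ℝ} (he : 0 < e) (hh : 0 < h) (hK : 0 < K)
    (ha : 0 < a) (hab : a ≤ b) :
    e * a * K / (1 + h * a * K) ≤ e * b * K / (1 + h * b * K) := by
  have hb : 0 < b := lt_of_lt_of_le ha hab
  have d1 : 0 < 1 + h * a * K := by positivity
  have d2 : 0 < 1 + h * b * K := by positivity
  rw [div_le_div_iff₀ d1 d2]
  nlinarith [mul_nonneg (mul_nonneg he.le hK.le) (sub_nonneg.mpr hab)]

lemma holling_strict {e h K a b : ℝ} (he : 0 < e) (hh : 0 < h) (hK : 0 < K)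
    (ha : 0 < a) (hab : a < b) :
    e * a * K / (1 + h * a * K) < e * b * K / (1 + h * b * K) := by
  have hb : 0 < b := lt_trans ha hab
  have d1 : 0 < 1 + h * a * K := by positivity
  have d2 : 0 < 1 + h * b * K := by positivity
  rw [div_lt_div_iff₀ d1 d2]
  nlinarith [mul_pos (mul_pos he hK) (sub_pos.mpr hab)]

/-- the ESS maximum principle at the host-only state (K₀₁, 0) with
trait values (0,0), for Gaussian trait functions K₁(v) = K₀₁ exp(−v²/(2σK₁²)) and
a(v₁,v₂) = a₀ exp(−(v₁−v₂)²/(2σa²)):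
(i) the host fitness G₁(v₁) = r₁(1 − K₀₁/K₁(v₁)) is ≤ 0 everywhere, with equality
iff v₁ = 0; (ii) if r₂ + ea₀K₀₁/(1 + a₀hK₀₁) < d, then the parasite fitness
G₂(v₂) = ea(0,v₂)K₀₁/(1 + ha(0,v₂)K₀₁) − d + r₂ satisfies
G₂(v₂) ≤ ea₀K₀₁/(1 + ha₀K₀₁) − d + r₂ < 0, with equality iff v₂ = 0. -/
theorem hostOnly_ESS_maximum_principle
    (r₁ r₂ K₀₁ K₀₂ a₀ h e d σK₁ σK₂ σa : ℝ)
    (hr₁ : 0 < r₁) (hr₂ : 0 < r₂) (hK₀₁ : 0 < K₀₁) (hK₀₂ : 0 < K₀₂)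
    (ha₀ : 0 < a₀) (hh : 0 < h) (he : 0 < e) (hd : 0 ≤ d)
    (hσK₁ : 0 < σK₁) (hσK₂ : 0 < σK₂) (hσa : 0 < σa) :
    (∀ v₁ : ℝ,
      r₁ * (1 - K₀₁ / (K₀₁ * Real.exp (-(v₁ ^ 2) / (2 * σK₁ ^ 2)))) ≤ 0 ∧
      (r₁ * (1 - K₀₁ / (K₀₁ * Real.exp (-(v₁ ^ 2) / (2 * σK₁ ^ 2)))) = 0 ↔ v₁ = 0)) ∧
    (r₂ + e * a₀ * K₀₁ / (1 + a₀ * h * K₀₁) < d →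
      ∀ v₂ : ℝ,
        (e * (a₀ * Real.exp (-((0 - v₂) ^ 2) / (2 * σa ^ 2))) * K₀₁
            / (1 + h * (a₀ * Real.exp (-((0 - v₂) ^ 2) / (2 * σa ^ 2))) * K₀₁)
            - d + r₂
          ≤ e * a₀ * K₀₁ / (1 + h * a₀ * K₀₁) - d + r₂) ∧
        e * a₀ * K₀₁ / (1 + h * a₀ * K₀₁) - d + r₂ < 0 ∧
        (e * (a₀ * Real.exp (-((0 - v₂) ^ 2) / (2 * σa ^ 2))) * K₀₁
            / (1 + h * (a₀ * Real.exp (-((0 - v₂) ^ 2) / (2 * σa ^ 2))) * K₀₁)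
            - d + r₂
          = e * a₀ * K₀₁ / (1 + h * a₀ * K₀₁) - d + r₂ ↔ v₂ = 0)) := by
  constructor
  · intro v₁
    set t := -(v₁ ^ 2) / (2 * σK₁ ^ 2) with ht
    have hE : (0:ℝ) < Real.exp t := Real.exp_pos t
    have hsimp : K₀₁ / (K₀₁ * Real.exp t) = 1 / Real.exp t := by
      rw [div_eq_div_iff (by positivity) hE.ne']; ring
    have htle : t ≤ 0 := by
      apply div_nonpos_of_nonpos_of_nonneg <;> [nlinarith; positivity]
    have hE1 : Real.exp t ≤ 1 := Real.exp_le_one_iff.mpr htle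
    have h1le : 1 ≤ 1 / Real.exp t := by rw [le_div_iff₀ hE]; linarith
    constructor
    · rw [hsimp]; nlinarith
    · rw [hsimp]
      constructor
      · intro heq
        have : 1 / Real.exp t = 1 := by nlinarith
        have : Real.exp t = 1 := by field_simp at this; linarith
        have ht0 : t = 0 := Real.exp_eq_exp.mp (by rw [this, Real.exp_zero])
        have : v₁ ^ 2 = 0 := by
          by_contra hc
          have hv : 0 < v₁ ^ 2 := lt_of_le_of_ne (sq_nonneg v₁) (Ne.symm hc)
          have : t < 0 := div_neg_of_neg_of_pos (by linarith) (by positivity)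
          linarith
        have := pow_eq_zero_iff (n := 2) (by norm_num) |>.mp this
        exact this
      · intro hv; subst hv
        simp [ht]
  · intro hcond v₂
    set E := Real.exp (-((0 - v₂) ^ 2) / (2 * σa ^ 2)) with hEdef
    have hE : (0:ℝ) < E := Real.exp_pos _
    have htle : -((0 - v₂) ^ 2) / (2 * σa ^ 2) ≤ 0 := by
      apply div_nonpos_of_nonpos_of_nonneg <;> [nlinarith [sq_nonneg (0 - v₂)]; positivity]
    have hE1 : E ≤ 1 := Real.exp_le_one_iff.mpr htle
    have haE : a₀ * E ≤ a₀ := by nlinarith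
    have haEpos : 0 < a₀ * E := by positivity
    have hle : e * (a₀ * E) * K₀₁ / (1 + h * (a₀ * E) * K₀₁)
        ≤ e * a₀ * K₀₁ / (1 + h * a₀ * K₀₁) := holling_mono he hh hK₀₁ haEpos haE
    have hswap : e * a₀ * K₀₁ / (1 + h * a₀ * K₀₁)
        = e * a₀ * K₀₁ / (1 + a₀ * h * K₀₁) := by ring_nf
    refine ⟨by linarith, by rw [hswap]; linarith, ?_⟩
    constructor
    · intro heq
      by_contra hv
      have hvpos : 0 < (0 - v₂) ^ 2 := by
        have : (0 : ℝ) - v₂ ≠ 0 := by intro hc; apply hv; linarith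
        positivity
      have htlt : -((0 - v₂) ^ 2) / (2 * σa ^ 2) < 0 :=
        div_neg_of_neg_of_pos (by linarith) (by positivity)
      have hE1' : E < 1 := by
        rw [hEdef]; calc Real.exp _ < Real.exp 0 := Real.exp_lt_exp.mpr htlt
          _ = 1 := Real.exp_zero
      have haE' : a₀ * E < a₀ := by nlinarith
      have := holling_strict he hh hK₀₁ haEpos haE'
      linarith
    · intro hv; subst hv
      have : E = 1 := by simp [hEdef]
      rw [this]; ring_nf
end

section
/- Let (x₁*, x₂*) with x₁* > 0, x₂* > 0 satisfy the interior equilibrium equations r₁(1 − x₁*/K₀₁) = a₀·x₂*/(1 + h·a₀·x₁*) and e·a₀·x₁*/(1 + h·a₀·x₁*) − d + r₂(1 − x₂*/K₀₂) = 0. Then: (i) for every v₂ ∈ ℝ, G₂(v₂) = e·a(0, v₂)·x₁*/(1 + h·a(0, v₂)·x₁*) − d + r₂(1 − x₂*/K₂(v₂)) satisfies G₂(v₂) ≤ G₂(0) = 0; and (ii) if x₂*/x₁* ≤ M where M = max{(σ_{K₂}/σ_{K₁})·√(r₁·e·K₀₂/(r₂·K₀₁)), r₁·σ_{K₂}²·σ_a²/(a₀·K₀₁)},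 and r₁/(σ_{K₁}²·K₀₁) > M·a₀/σ_a², then for every v₁ ∈ ℝ, G₁(v₁) = r₁(1 − x₁*/K₁(v₁)) − a(v₁, 0)·x₂*/(1 + h·a(v₁, 0)·x₁*) satisfies G₁(v₁) ≤ G₁(0) = 0. -/
set_option maxHeartbeats 1000000


/-- ESS maximum principle at an interior equilibrium (x₁*, x₂*) with
trait values (0,0), for Gaussian trait functions K₁(v) = K₀₁ exp(−v²/(2σK₁²)),
K₂(v) = K₀₂ exp(−v²/(2σK₂²)), a(v₁,v₂) = a₀ exp(−(v₁−v₂)²/(2σa²)):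
(i) the parasite fitness G₂ attains its maximum 0 at v₂ = 0;
(ii) if x₂*/x₁* ≤ M, with M = max{(σK₂/σK₁)√(r₁eK₀₂/(r₂K₀₁)), r₁σK₂²σa²/(a₀K₀₁)},
and r₁/(σK₁²K₀₁) > M·a₀/σa², the host fitness G₁ attains its maximum 0 at v₁ = 0. -/
theorem interior_ESS_maximum_principle
    (r₁ r₂ K₀₁ K₀₂ a₀ h e d σK₁ σK₂ σa : ℝ)
    (hr₁ : 0 < r₁) (hr₂ : 0 < r₂) (hK₀₁ : 0 < K₀₁) (hK₀₂ : 0 < K₀₂)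
    (ha₀ : 0 < a₀) (hh : 0 < h) (he : 0 < e) (hd : 0 ≤ d)
    (hσK₁ : 0 < σK₁) (hσK₂ : 0 < σK₂) (hσa : 0 < σa)
    (x₁ x₂ : ℝ) (hx₁ : 0 < x₁) (hx₂ : 0 < x₂)
    (heq₁ : r₁ * (1 - x₁ / K₀₁) = a₀ * x₂ / (1 + h * a₀ * x₁))
    (heq₂ : e * a₀ * x₁ / (1 + h * a₀ * x₁) - d + r₂ * (1 - x₂ / K₀₂) = 0) :
    (∀ v₂ : ℝ,
      e * (a₀ * Real.exp (-((0 - v₂) ^ 2) / (2 * σa ^ 2))) * x₁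
          / (1 + h * (a₀ * Real.exp (-((0 - v₂) ^ 2) / (2 * σa ^ 2))) * x₁)
        - d + r₂ * (1 - x₂ / (K₀₂ * Real.exp (-(v₂ ^ 2) / (2 * σK₂ ^ 2)))) ≤ 0) ∧
    (e * a₀ * x₁ / (1 + h * a₀ * x₁) - d + r₂ * (1 - x₂ / K₀₂) = 0) ∧
    ((x₂ / x₁ ≤ max (σK₂ / σK₁ * Real.sqrt (r₁ * e * K₀₂ / (r₂ * K₀₁)))
          (r₁ * σK₂ ^ 2 * σa ^ 2 / (a₀ * K₀₁)) ∧
      r₁ / (σK₁ ^ 2 * K₀₁) >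
        max (σK₂ / σK₁ * Real.sqrt (r₁ * e * K₀₂ / (r₂ * K₀₁)))
          (r₁ * σK₂ ^ 2 * σa ^ 2 / (a₀ * K₀₁)) * a₀ / σa ^ 2) →
      (∀ v₁ : ℝ,
        r₁ * (1 - x₁ / (K₀₁ * Real.exp (-(v₁ ^ 2) / (2 * σK₁ ^ 2))))
          - (a₀ * Real.exp (-((v₁ - 0) ^ 2) / (2 * σa ^ 2))) * x₂
              / (1 + h * (a₀ * Real.exp (-((v₁ - 0) ^ 2) / (2 * σa ^ 2))) * x₁) ≤ 0) ∧
      r₁ * (1 - x₁ / K₀₁) - a₀ * x₂ / (1 + h * a₀ * x₁) = 0) := by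
  have hD₀ : (0:ℝ) < 1 + h * a₀ * x₁ := by positivity
  refine ⟨?_, heq₂, ?_⟩
  · intro v₂
    set q := Real.exp (-((0 - v₂) ^ 2) / (2 * σa ^ 2)) with hqdef
    set p := Real.exp (-(v₂ ^ 2) / (2 * σK₂ ^ 2)) with hpdef
    have hq0 : 0 < q := Real.exp_pos _
    have hp0 : 0 < p := Real.exp_pos _
    have hq1 : q ≤ 1 := Real.exp_le_one_iff.mpr
      (div_nonpos_of_nonpos_of_nonneg (neg_nonpos.mpr (sq_nonneg _)) (by positivity))
    have hp1 : p ≤ 1 := Real.exp_le_one_iff.mpr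
      (div_nonpos_of_nonpos_of_nonneg (neg_nonpos.mpr (sq_nonneg _)) (by positivity))
    have hD : (0:ℝ) < 1 + h * (a₀ * q) * x₁ := by positivity
    have h1 : e * (a₀ * q) * x₁ / (1 + h * (a₀ * q) * x₁)
        ≤ e * a₀ * x₁ / (1 + h * a₀ * x₁) := by
      rw [div_le_div_iff₀ hD hD₀]
      nlinarith [mul_pos (mul_pos he ha₀) hx₁, hq0.le]
    have h2 : x₂ / K₀₂ ≤ x₂ / (K₀₂ * p) := by
      apply div_le_div_of_nonneg_left hx₂.le (by positivity)
      nlinarith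
    have h2' : r₂ * (x₂ / K₀₂) ≤ r₂ * (x₂ / (K₀₂ * p)) :=
      mul_le_mul_of_nonneg_left h2 hr₂.le
    have e5 : r₂ * (1 - x₂ / (K₀₂ * p)) = r₂ - r₂ * (x₂ / (K₀₂ * p)) := by ring
    have e6 : r₂ * (1 - x₂ / K₀₂) = r₂ - r₂ * (x₂ / K₀₂) := by ring
    linarith
  · rintro ⟨hM1, hM2⟩
    set M := max (σK₂ / σK₁ * Real.sqrt (r₁ * e * K₀₂ / (r₂ * K₀₁)))
        (r₁ * σK₂ ^ 2 * σa ^ 2 / (a₀ * K₀₁)) with hMdef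
    have hMpos : 0 < M := lt_of_lt_of_le (by positivity) (le_max_right _ _)
    have hx2M : x₂ ≤ M * x₁ := by
      rw [div_le_iff₀ hx₁] at hM1; linarith
    have hM2' : M * a₀ * (σK₁ ^ 2 * K₀₁) < r₁ * σa ^ 2 := by
      rw [gt_iff_lt, div_lt_div_iff₀ (by positivity) (by positivity)] at hM2
      linarith
    have hkey : a₀ * x₂ / σa ^ 2 ≤ r₁ * x₁ / (σK₁ ^ 2 * K₀₁) := by
      rw [div_le_div_iff₀ (by positivity) (by positivity)]
      nlinarith [mul_lt_mul_of_pos_right hM2' hx₁,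
        mul_le_mul_of_nonneg_left hx2M (le_of_lt (by positivity : (0:ℝ) < a₀ * (σK₁ ^ 2 * K₀₁)))]
    refine ⟨?_, by linarith⟩
    intro v₁
    set q := Real.exp (-((v₁ - 0) ^ 2) / (2 * σa ^ 2)) with hqdef
    set p := Real.exp (-(v₁ ^ 2) / (2 * σK₁ ^ 2)) with hpdef
    have hq0 : 0 < q := Real.exp_pos _
    have hp0 : 0 < p := Real.exp_pos _
    have hq1 : q ≤ 1 := Real.exp_le_one_iff.mpr
      (div_nonpos_of_nonpos_of_nonneg (neg_nonpos.mpr (sq_nonneg _)) (by positivity))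
    set t₁ := v₁ ^ 2 / (2 * σK₁ ^ 2) with ht₁def
    set t₂ := (v₁ - 0) ^ 2 / (2 * σa ^ 2) with ht₂def
    have ht₁0 : 0 ≤ t₁ := by positivity
    have ht₂0 : 0 ≤ t₂ := by positivity
    have hpeq : p = (Real.exp t₁)⁻¹ := by
      rw [hpdef, ht₁def, ← Real.exp_neg, neg_div]
    have hpinv : p⁻¹ = Real.exp t₁ := by rw [hpeq, inv_inv]
    have hA : x₁ / K₀₁ * (1 + t₁) ≤ x₁ / (K₀₁ * p) := by
      have h1 : (1:ℝ) + t₁ ≤ p⁻¹ := by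
        rw [hpinv]; linarith [Real.add_one_le_exp t₁]
      have h2 : x₁ / (K₀₁ * p) = x₁ / K₀₁ * p⁻¹ := by
        rw [div_mul_eq_div_div, div_eq_mul_inv]
      rw [h2]
      exact mul_le_mul_of_nonneg_left h1 (by positivity)
    have hA' : r₁ * (x₁ / K₀₁ * (1 + t₁)) ≤ r₁ * (x₁ / (K₀₁ * p)) :=
      mul_le_mul_of_nonneg_left hA hr₁.le
    have hqlb : 1 - t₂ ≤ q := by
      rw [hqdef]
      have h := Real.add_one_le_exp (-t₂)
      have heqt : -((v₁ - 0) ^ 2) / (2 * σa ^ 2) = -t₂ := by rw [ht₂def]; ring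
      rw [heqt]; linarith
    have hD : (0:ℝ) < 1 + h * (a₀ * q) * x₁ := by positivity
    have hB1 : a₀ * q * x₂ / (1 + h * a₀ * x₁) ≤ (a₀ * q) * x₂ / (1 + h * (a₀ * q) * x₁) := by
      gcongr
      nlinarith [mul_pos (mul_pos hh ha₀) hx₁]
    have hB : a₀ * x₂ / (1 + h * a₀ * x₁) - (a₀ * q) * x₂ / (1 + h * (a₀ * q) * x₁)
        ≤ a₀ * x₂ * t₂ := by
      have step : a₀ * x₂ / (1 + h * a₀ * x₁) - a₀ * q * x₂ / (1 + h * a₀ * x₁)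
          = a₀ * x₂ * (1 - q) / (1 + h * a₀ * x₁) := by ring
      have h2 : a₀ * x₂ * (1 - q) / (1 + h * a₀ * x₁) ≤ a₀ * x₂ * (1 - q) := by
        apply div_le_self (mul_nonneg (mul_nonneg ha₀.le hx₂.le) (by linarith))
          (by nlinarith [mul_pos (mul_pos hh ha₀) hx₁])
      have h3 : a₀ * x₂ * (1 - q) ≤ a₀ * x₂ * t₂ :=
        mul_le_mul_of_nonneg_left (by linarith) (by positivity)
      linarith
    have hfin : v₁ ^ 2 / 2 * (a₀ * x₂ / σa ^ 2) ≤ v₁ ^ 2 / 2 * (r₁ * x₁ / (σK₁ ^ 2 * K₀₁)) :=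
      mul_le_mul_of_nonneg_left hkey (by positivity)
    have e1 : a₀ * x₂ * t₂ = v₁ ^ 2 / 2 * (a₀ * x₂ / σa ^ 2) := by
      rw [ht₂def]; ring
    have e2 : r₁ * (x₁ / K₀₁ * (1 + t₁))
        = r₁ * (x₁ / K₀₁) + v₁ ^ 2 / 2 * (r₁ * x₁ / (σK₁ ^ 2 * K₀₁)) := by
      rw [ht₁def]; field_simp
    have e3 : r₁ * (1 - x₁ / (K₀₁ * p)) = r₁ - r₁ * (x₁ / (K₀₁ * p)) := by ring
    have e4 : r₁ * (1 - x₁ / K₀₁) = r₁ - r₁ * (x₁ / K₀₁) := by ring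
    linarith
end

section
/- Suppose (x₁*, x₂*, u₁*, u₂*) is an equilibrium of the Gaussian co-evolutionary model with x₁* > 0, x₂* > 0 and u₁*·u₂* ≠ 0. Then: (i) u₁*, u₂* and u₁* − u₂* all have the same sign (in particular u₁*·u₂* > 0, u₁*·(u₁* − u₂*) > 0 and |u₁*| > |u₂*|); (ii) x₂* = √(e·r₁·σ_{K₂}²·u₁*·K₂(u₂*)/(r₂·σ_{K₁}²·u₂*·K₁(u₁*)))·x₁*; and (iii) if σ_{K₂} ≥ σ_{K₁}, then x₂*/x₁* > (σ_{K₂}/σ_{K₁})·√(e·r₁·K₀₂/(r₂·K₀₁)). Consequently, if σ_{K₂} ≥ σ_{K₁}, the model has no equilibrium with x₁* > 0, x₂* > 0, u₁*·u₂* ≠ 0 and x₂*/x₁* ≤ (σ_{K₂}/σ_{K₁})·√(e·r₁·K₀₂/(r₂·K₀₁)). -/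
lemma coevo_sign_transfer {c c' v w : ℝ} (hc : 0 < c) (hc' : 0 < c')
    (h : c * v = c' * w) : (0 < w → 0 < v) ∧ (w < 0 → v < 0) := by
  constructor <;> intro hw <;> nlinarith

/-- necessary conditions at an equilibrium (x₁*, x₂*, u₁*, u₂*) of
the Gaussian co-evolutionary model with x₁*, x₂* > 0 and u₁*u₂* ≠ 0:
(i) u₁*, u₂* and u₁* − u₂* have the same sign (so u₁*u₂* > 0, u₁*(u₁* − u₂*) > 0
and |u₁*| > |u₂*|);
(ii) x₂* = √(er₁σK₂²u₁*K₂(u₂*)/(r₂σK₁²u₂*K₁(u₁*)))·x₁*;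
(iii) if σK₂ ≥ σK₁ then x₂*/x₁* > (σK₂/σK₁)√(er₁K₀₂/(r₂K₀₁)). -/
theorem coevo_interior_trait_equilibrium
    (r₁ r₂ K₀₁ K₀₂ a₀ h e d σ₁ σ₂ σK₁ σK₂ σa : ℝ)
    (hr₁ : 0 < r₁) (hr₂ : 0 < r₂) (hK₀₁ : 0 < K₀₁) (hK₀₂ : 0 < K₀₂)
    (ha₀ : 0 < a₀) (hh : 0 < h) (he : 0 < e) (hd : 0 ≤ d)
    (hσ₁ : 0 < σ₁) (hσ₂ : 0 < σ₂) (hσK₁ : 0 < σK₁) (hσK₂ : 0 < σK₂) (hσa : 0 < σa)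
    (x₁ x₂ u₁ u₂ : ℝ) (hx₁ : 0 < x₁) (hx₂ : 0 < x₂) (hu : u₁ * u₂ ≠ 0)
    (heq₁ : x₁ * (r₁ * (1 - x₁ / (K₀₁ * Real.exp (-(u₁ ^ 2) / (2 * σK₁ ^ 2))))
        - (a₀ * Real.exp (-((u₁ - u₂) ^ 2) / (2 * σa ^ 2))) * x₂
            / (1 + h * (a₀ * Real.exp (-((u₁ - u₂) ^ 2) / (2 * σa ^ 2))) * x₁)) = 0)
    (heq₂ : x₂ * (e * (a₀ * Real.exp (-((u₁ - u₂) ^ 2) / (2 * σa ^ 2))) * x₁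
            / (1 + h * (a₀ * Real.exp (-((u₁ - u₂) ^ 2) / (2 * σa ^ 2))) * x₁)
        - d + r₂ * (1 - x₂ / (K₀₂ * Real.exp (-(u₂ ^ 2) / (2 * σK₂ ^ 2))))) = 0)
    (heq₃ : σ₁ ^ 2 * (-(r₁ * x₁ * u₁)
            / (σK₁ ^ 2 * (K₀₁ * Real.exp (-(u₁ ^ 2) / (2 * σK₁ ^ 2))))
        + (u₁ - u₂) * x₂ * (a₀ * Real.exp (-((u₁ - u₂) ^ 2) / (2 * σa ^ 2)))
            / (σa ^ 2 * (1 + h * (a₀ * Real.exp (-((u₁ - u₂) ^ 2) / (2 * σa ^ 2))) * x₁) ^ 2))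
      = 0)
    (heq₄ : σ₂ ^ 2 * (-(r₂ * x₂ * u₂)
            / (σK₂ ^ 2 * (K₀₂ * Real.exp (-(u₂ ^ 2) / (2 * σK₂ ^ 2))))
        + e * (u₁ - u₂) * x₁ * (a₀ * Real.exp (-((u₁ - u₂) ^ 2) / (2 * σa ^ 2)))
            / (σa ^ 2 * (1 + h * (a₀ * Real.exp (-((u₁ - u₂) ^ 2) / (2 * σa ^ 2))) * x₁) ^ 2))
      = 0) :
    ((0 < u₁ ∧ 0 < u₂ ∧ 0 < u₁ - u₂) ∨ (u₁ < 0 ∧ u₂ < 0 ∧ u₁ - u₂ < 0)) ∧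
    (0 < u₁ * u₂ ∧ 0 < u₁ * (u₁ - u₂) ∧ |u₂| < |u₁|) ∧
    x₂ = Real.sqrt (e * r₁ * σK₂ ^ 2 * u₁ * (K₀₂ * Real.exp (-(u₂ ^ 2) / (2 * σK₂ ^ 2)))
        / (r₂ * σK₁ ^ 2 * u₂ * (K₀₁ * Real.exp (-(u₁ ^ 2) / (2 * σK₁ ^ 2))))) * x₁ ∧
    (σK₁ ≤ σK₂ →
      x₂ / x₁ > σK₂ / σK₁ * Real.sqrt (e * r₁ * K₀₂ / (r₂ * K₀₁))) := by
  obtain ⟨hu₁, hu₂⟩ := mul_ne_zero_iff.mp hu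
  set E1 := Real.exp (-(u₁ ^ 2) / (2 * σK₁ ^ 2)) with hE1
  set E2 := Real.exp (-(u₂ ^ 2) / (2 * σK₂ ^ 2)) with hE2
  set A := a₀ * Real.exp (-((u₁ - u₂) ^ 2) / (2 * σa ^ 2)) with hA
  have hE1pos : 0 < E1 := Real.exp_pos _
  have hE2pos : 0 < E2 := Real.exp_pos _
  have hApos : 0 < A := by rw [hA]; positivity
  set D := 1 + h * A * x₁ with hD
  have hDpos : 0 < D := by
    have := mul_pos (mul_pos hh hApos) hx₁; rw [hD]; linarith
  have h3 : -(r₁ * x₁ * u₁) / (σK₁ ^ 2 * (K₀₁ * E1))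
      + (u₁ - u₂) * x₂ * A / (σa ^ 2 * D ^ 2) = 0 := by
    rcases mul_eq_zero.mp heq₃ with h | h
    · exact absurd h (by positivity)
    · exact h
  have h4 : -(r₂ * x₂ * u₂) / (σK₂ ^ 2 * (K₀₂ * E2))
      + e * (u₁ - u₂) * x₁ * A / (σa ^ 2 * D ^ 2) = 0 := by
    rcases mul_eq_zero.mp heq₄ with h | h
    · exact absurd h (by positivity)
    · exact h
  have hK1ne : (σK₁ ^ 2 * (K₀₁ * E1)) ≠ 0 := by positivity
  have hK2ne : (σK₂ ^ 2 * (K₀₂ * E2)) ≠ 0 := by positivity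
  have hDne : (σa ^ 2 * D ^ 2) ≠ 0 := by positivity
  have P3 : r₁ * x₁ * u₁ * (σa ^ 2 * D ^ 2)
      = (u₁ - u₂) * x₂ * A * (σK₁ ^ 2 * (K₀₁ * E1)) := by
    field_simp at h3
    linarith
  have P4 : r₂ * x₂ * u₂ * (σa ^ 2 * D ^ 2)
      = e * (u₁ - u₂) * x₁ * A * (σK₂ ^ 2 * (K₀₂ * E2)) := by
    field_simp at h4
    linarith
  have hc1 : 0 < r₁ * x₁ * (σa ^ 2 * D ^ 2) := by positivity
  have hc2 : 0 < x₂ * A * (σK₁ ^ 2 * (K₀₁ * E1)) := by positivity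
  have hc3 : 0 < r₂ * x₂ * (σa ^ 2 * D ^ 2) := by positivity
  have hc4 : 0 < e * x₁ * A * (σK₂ ^ 2 * (K₀₂ * E2)) := by positivity
  have P3' : (r₁ * x₁ * (σa ^ 2 * D ^ 2)) * u₁
      = (x₂ * A * (σK₁ ^ 2 * (K₀₁ * E1))) * (u₁ - u₂) := by linear_combination P3
  have P4' : (r₂ * x₂ * (σa ^ 2 * D ^ 2)) * u₂
      = (e * x₁ * A * (σK₂ ^ 2 * (K₀₂ * E2))) * (u₁ - u₂) := by linear_combination P4
  have hs : u₁ - u₂ ≠ 0 := by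
    intro h0
    apply hu₁
    have h2 : (r₁ * x₁ * (σa ^ 2 * D ^ 2)) * u₁ = 0 := by rw [P3', h0, mul_zero]
    rcases mul_eq_zero.mp h2 with h | h
    · exact absurd h hc1.ne'
    · exact h
  have hsigns : ((0 < u₁ ∧ 0 < u₂ ∧ 0 < u₁ - u₂) ∨ (u₁ < 0 ∧ u₂ < 0 ∧ u₁ - u₂ < 0)) := by
    rcases hs.lt_or_gt with hlt | hgt
    · exact Or.inr ⟨(coevo_sign_transfer hc1 hc2 P3').2 hlt,
        (coevo_sign_transfer hc3 hc4 P4').2 hlt, hlt⟩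
    · exact Or.inl ⟨(coevo_sign_transfer hc1 hc2 P3').1 hgt,
        (coevo_sign_transfer hc3 hc4 P4').1 hgt, hgt⟩
  have hu₁u₂ : 0 < u₁ * u₂ := by
    rcases hsigns with ⟨a, b, c⟩ | ⟨a, b, c⟩
    · exact mul_pos a b
    · exact mul_pos_of_neg_of_neg a b
  have hu₁d : 0 < u₁ * (u₁ - u₂) := by
    rcases hsigns with ⟨a, b, c⟩ | ⟨a, b, c⟩
    · exact mul_pos a c
    · exact mul_pos_of_neg_of_neg a c
  have hu₂d : 0 < u₂ * (u₁ - u₂) := by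
    rcases hsigns with ⟨a, b, c⟩ | ⟨a, b, c⟩
    · exact mul_pos b c
    · exact mul_pos_of_neg_of_neg b c
  have habs : |u₂| < |u₁| := by
    rcases hsigns with ⟨a, b, c⟩ | ⟨a, b, c⟩
    · rw [abs_of_pos a, abs_of_pos b]; linarith
    · rw [abs_of_neg a, abs_of_neg b]; linarith
  -- key cross relation
  have Q : (e * r₁ * x₁ ^ 2 * u₁ * (σK₂ ^ 2 * (K₀₂ * E2))) * (σa ^ 2 * D ^ 2)
      = (r₂ * x₂ ^ 2 * u₂ * (σK₁ ^ 2 * (K₀₁ * E1))) * (σa ^ 2 * D ^ 2) := by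
    linear_combination (e * x₁ * (σK₂ ^ 2 * (K₀₂ * E2))) * P3
      - (x₂ * (σK₁ ^ 2 * (K₀₁ * E1))) * P4
  have Q' : e * r₁ * x₁ ^ 2 * u₁ * (σK₂ ^ 2 * (K₀₂ * E2))
      = r₂ * x₂ ^ 2 * u₂ * (σK₁ ^ 2 * (K₀₁ * E1)) := mul_right_cancel₀ hDne Q
  set R := e * r₁ * σK₂ ^ 2 * u₁ * (K₀₂ * E2) / (r₂ * σK₁ ^ 2 * u₂ * (K₀₁ * E1)) with hR
  have hDenne : r₂ * σK₁ ^ 2 * u₂ * (K₀₁ * E1) ≠ 0 := by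
    apply mul_ne_zero (mul_ne_zero (mul_ne_zero hr₂.ne' (by positivity)) hu₂)
    positivity
  have hR_alt : R = (e * r₁ * σK₂ ^ 2 * (u₁ * u₂) * (K₀₂ * E2))
      / (r₂ * σK₁ ^ 2 * u₂ ^ 2 * (K₀₁ * E1)) := by
    rw [hR, div_eq_div_iff hDenne (by positivity)]
    ring
  have hRpos : 0 < R := by
    rw [hR_alt]
    apply div_pos
    · have := mul_pos (mul_pos (mul_pos (mul_pos he hr₁) (pow_pos hσK₂ 2)) hu₁u₂)
        (mul_pos hK₀₂ hE2pos)
      linarith [this]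
    · positivity
  have hx2sq : x₂ ^ 2 = R * x₁ ^ 2 := by
    rw [hR]
    field_simp
    linear_combination -Q'
  have hmain : x₂ = Real.sqrt R * x₁ := by
    rw [← Real.sqrt_sq hx₂.le, hx2sq, Real.sqrt_mul hRpos.le, Real.sqrt_sq hx₁.le]
  refine ⟨hsigns, ⟨hu₁u₂, hu₁d, habs⟩, hmain, ?_⟩
  intro hσ
  -- part (iii)
  have hu2sq : u₂ ^ 2 < u₁ ^ 2 := by
    have := pow_lt_pow_left₀ habs (abs_nonneg _) (by norm_num : 2 ≠ 0)
    simpa [sq_abs] using this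
  have hElt : E1 < E2 := by
    rw [hE1, hE2]
    apply Real.exp_lt_exp.mpr
    rw [div_lt_div_iff₀ (by positivity) (by positivity)]
    have h1 : σK₁ ^ 2 ≤ σK₂ ^ 2 := pow_le_pow_left₀ hσK₁.le hσ 2
    have h2 : u₂ ^ 2 * σK₁ ^ 2 ≤ u₂ ^ 2 * σK₂ ^ 2 :=
      mul_le_mul_of_nonneg_left h1 (sq_nonneg u₂)
    have h3 : u₂ ^ 2 * σK₂ ^ 2 < u₁ ^ 2 * σK₂ ^ 2 :=
      mul_lt_mul_of_pos_right hu2sq (pow_pos hσK₂ 2)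
    linarith
  have huu : u₂ ^ 2 < u₁ * u₂ := by linarith [hu₂d]
  have hu₂sqpos : 0 < u₂ ^ 2 := by positivity
  have hcore : u₂ ^ 2 * E1 < u₁ * u₂ * E2 :=
    lt_trans (mul_lt_mul_of_pos_left hElt hu₂sqpos) (mul_lt_mul_of_pos_right huu hE2pos)
  have hclt : (σK₂ / σK₁) ^ 2 * (e * r₁ * K₀₂ / (r₂ * K₀₁)) < R := by
    rw [hR_alt, div_pow, div_mul_div_comm,
      div_lt_div_iff₀ (by positivity) (by positivity)]
    have hC : 0 < σK₂ ^ 2 * e * r₁ * K₀₂ * (r₂ * σK₁ ^ 2 * K₀₁) := by positivity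
    linarith [mul_lt_mul_of_pos_left hcore hC]
  have hrhs : σK₂ / σK₁ * Real.sqrt (e * r₁ * K₀₂ / (r₂ * K₀₁))
      = Real.sqrt ((σK₂ / σK₁) ^ 2 * (e * r₁ * K₀₂ / (r₂ * K₀₁))) := by
    rw [Real.sqrt_mul (by positivity), Real.sqrt_sq (by positivity)]
  have hx21 : x₂ / x₁ = Real.sqrt R := by
    rw [hmain, mul_div_assoc, div_self hx₁.ne', mul_one]
  rw [gt_iff_lt, hx21, hrhs]
  exact Real.sqrt_lt_sqrt (by positivity) hclt
end
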